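/- arXiv:1903.10365 — 9 statements merged into one kernel-verified Lean document; each statement's English description precedes it below -/
import Mathlib

section
/- For every integer k ≥ 2, ∫_0^1 (r^{-2} − ∑_{j=0}^{k-1} (1-r²)^j)² · r^{2k+1} · (1-r²)^{-2k} dr = 1/(2(k-1)). Consequently, for n = 2k+2 the quantity Γ(n/2)Γ(k)(∑_{j=0}^{k-1} Γ(j+(n-2k)/2)/(Γ(j+1)Γ((n-2k)/2))) / (2^{(n+2k)/2} Γ((n-2k)/2) ∫_0^1 (r^{2k-n} − ∑_{j=0}^{k-1}(Γ(j+(n-2k)/2)/(Γ(j+1)Γ((n-2k)/2)))(1-r²)^j)² r^{n-1}(1-r²)^{-2k} dr) equals (k-1)(k!)²/2^{2k}. -/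
open Real Finset

/-!
With `x = 1 - r²` the geometric sum gives `r⁻² - ∑_{j<k} x^j = x^k / r²`, so the integrand of the
first integral collapses to `r^{2k-3}`, whose integral over `[0, 1]` is `1/(2(k-1))`. For `n = 2k+2`
the Gamma coefficients `Γ(j+1)/(Γ(j+1)Γ(1))` are all `1` and `r^{2k-n} = r⁻²`, so the second
quantity is `Γ(k+1) Γ(k) k · 2(k-1) / 2^{2k+1} = (k-1)(k!)²/2^{2k}`.
-/

theorem inv_sub_geom_sum_one_sub {K : Type*} [Field K] {a : K} (ha : a ≠ 0) (k : ℕ) :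
    a⁻¹ - ∑ j ∈ range k, (1 - a) ^ j = (1 - a) ^ k / a := by
  have hsum : ∑ j ∈ range k, (1 - a) ^ j = (1 - (1 - a) ^ k) / a := by
    rw [eq_div_iff ha, ← geom_sum_mul_neg, sub_sub_cancel]
  rw [hsum]
  field_simp
  ring

theorem integral_inv_sq_sub_geom_sum (k : ℕ) (hk : 2 ≤ k) :
    (∫ r in (0 : ℝ)..1,
        ((r ^ 2)⁻¹ - ∑ j ∈ range k, (1 - r ^ 2) ^ j) ^ 2 *
          r ^ (2 * k + 1) / (1 - r ^ 2) ^ (2 * k)) = 1 / (2 * ((k : ℝ) - 1)) := by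
  obtain ⟨m, rfl⟩ : ∃ m, k = m + 2 := ⟨k - 2, by omega⟩
  have hintegrand : ∀ᵐ r ∂MeasureTheory.volume, r ∈ Set.uIoc (0 : ℝ) 1 →
      ((r ^ 2)⁻¹ - ∑ j ∈ range (m + 2), (1 - r ^ 2) ^ j) ^ 2 *
        r ^ (2 * (m + 2) + 1) / (1 - r ^ 2) ^ (2 * (m + 2)) = r ^ (2 * m + 1) := by
    filter_upwards [MeasureTheory.Measure.ae_ne MeasureTheory.volume 1] with r hr1 hr
    rw [Set.uIoc_of_le zero_le_one] at hr
    have hr0 : r ≠ 0 := hr.1.ne'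
    have hx : 1 - r ^ 2 ≠ 0 := by nlinarith [lt_of_le_of_ne hr.2 hr1, hr.1]
    rw [inv_sub_geom_sum_one_sub (pow_ne_zero 2 hr0)]
    field_simp
    ring
  rw [intervalIntegral.integral_congr_ae hintegrand, integral_pow, one_pow, zero_pow (by omega)]
  push_cast
  ring

/-- Remark 1.8 of the paper: evaluation of the integral
`∫₀¹ (r⁻² − ∑_{j<k}(1-r²)^j)² r^{2k+1} (1-r²)^{-2k} dr = 1/(2(k-1))`, and consequently
for `n = 2k+2` the lower-bound quantity of Theorem 1.7(2) equals `(k-1)(k!)²/2^{2k}`. -/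
theorem remark_1_8_evaluation (k : ℕ) (hk : 2 ≤ k) (n : ℕ) (hn : n = 2 * k + 2) :
    (∫ r in (0 : ℝ)..1,
        ((r ^ 2)⁻¹ - ∑ j ∈ Finset.range k, (1 - r ^ 2) ^ j) ^ 2 *
          r ^ (2 * k + 1) / (1 - r ^ 2) ^ (2 * k)) = 1 / (2 * ((k : ℝ) - 1))
    ∧
    (Real.Gamma ((n : ℝ) / 2) * Real.Gamma (k : ℝ) *
        ∑ j ∈ Finset.range k,
          Real.Gamma ((j : ℝ) + ((n : ℝ) - 2 * k) / 2) /
            (Real.Gamma ((j : ℝ) + 1) * Real.Gamma (((n : ℝ) - 2 * k) / 2))) /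
      ((2 : ℝ) ^ (((n : ℝ) + 2 * k) / 2) * Real.Gamma (((n : ℝ) - 2 * k) / 2) *
        ∫ r in (0 : ℝ)..1,
          (r ^ (2 * (k : ℝ) - n) -
            ∑ j ∈ Finset.range k,
              Real.Gamma ((j : ℝ) + ((n : ℝ) - 2 * k) / 2) /
                  (Real.Gamma ((j : ℝ) + 1) * Real.Gamma (((n : ℝ) - 2 * k) / 2)) *
                (1 - r ^ 2) ^ j) ^ 2 *
            r ^ (n - 1) / (1 - r ^ 2) ^ (2 * k))
    = ((k : ℝ) - 1) * (Nat.factorial k : ℝ) ^ 2 / 2 ^ (2 * k) := by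
  have hI := integral_inv_sq_sub_geom_sum k hk
  refine ⟨hI, ?_⟩
  have ha : ((n : ℝ) - 2 * k) / 2 = 1 := by rw [hn]; push_cast; ring
  have hcoef : ∀ j : ℕ, Gamma ((j : ℝ) + ((n : ℝ) - 2 * k) / 2) /
      (Gamma ((j : ℝ) + 1) * Gamma (((n : ℝ) - 2 * k) / 2)) = 1 := fun j => by
    rw [ha, Gamma_one, mul_one, div_self (Gamma_pos_of_pos (by positivity)).ne']
  have hpow : ∀ r : ℝ, r ^ (2 * (k : ℝ) - n) = (r ^ 2)⁻¹ := fun r => by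
    rw [show 2 * (k : ℝ) - n = ((-2 : ℤ) : ℝ) by rw [hn]; push_cast; ring, rpow_intCast,
      zpow_neg, zpow_ofNat]
  have hGamma : Gamma ((k : ℝ) + 1) * Gamma k * k = (Nat.factorial k : ℝ) ^ 2 := by
    rw [mul_assoc, mul_comm (Gamma k), ← Gamma_add_one (by positivity), Gamma_nat_eq_factorial,
      sq]
  simp only [hcoef, one_mul, hpow, show n - 1 = 2 * k + 1 by omega, hI, sum_const, card_range,
    nsmul_eq_mul, mul_one]
  rw [show ((n : ℝ) + 2 * k) / 2 = ((2 * k + 1 : ℕ) : ℝ) by rw [hn]; push_cast; ring,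
    show (n : ℝ) / 2 = k + 1 by rw [hn]; push_cast; ring, ha, rpow_natCast, Gamma_one, hGamma]
  have hk1 : (k : ℝ) - 1 ≠ 0 := by
    have : (2 : ℝ) ≤ k := by exact_mod_cast hk
    linarith
  field_simp
  ring
end

section
/- Let m be a positive integer and let D be the operator taking a function f : (0,∞) → ℝ to the function ρ ↦ −(1/sinh ρ)·f'(ρ). Then for every ρ > 0, the (m-1)-fold iterate of D applied to the function ρ ↦ 1/sinh ρ satisfies (D^{m-1}(1/sinh))(ρ) = (Γ(m)/π) · (sinh ρ)^{-(2m-1)} · ∫_0^π (cosh ρ + cos t)^{m-1} dt. -/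
/-!
With `Iₖ(u) = ∫₀^π (u + cos t)^k dt`, the `k`-th closed form is `k!/π · Iₖ(cosh ρ) / sinh^(2k+1) ρ`.
Differentiating under the integral sign gives `Iₖ' = k Iₖ₋₁`, and integrating
`d/dt [sin t (u + cos t)^k]` over `[0, π]`, where `sin` vanishes at both ends, gives
`(k+1) Iₖ₊₁ = (2k+1) u Iₖ - k (u² - 1) Iₖ₋₁`. With `cosh² - 1 = sinh²`, this recurrence says
precisely that `D` sends the `k`-th closed form to the `(k+1)`-st, and induction on `k` finishes.
-/

open Real intervalIntegral

open Nat

open MeasureTheory (volume)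

/-- `π` times the Legendre polynomial `Pₙ(u)` (Laplace's integral);
`succ_mul_laplaceIntegral_succ` is Bonnet's recursion. -/
noncomputable def laplaceIntegral (n : ℕ) (u : ℝ) : ℝ := ∫ t in (0 : ℝ)..π, (u + cos t) ^ n

lemma continuous_add_cos_pow (n : ℕ) (u : ℝ) : Continuous fun t => (u + cos t) ^ n :=
  (continuous_const.add continuous_cos).pow n

lemma laplaceIntegral_zero (u : ℝ) : laplaceIntegral 0 u = π := by
  simp [laplaceIntegral]

lemma abs_add_cos_le {u x : ℝ} (hx : x ∈ Metric.ball u 1) (t : ℝ) : |x + cos t| ≤ |u| + 2 := by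
  have hxu : |x - u| < 1 := by simpa [Real.dist_eq] using hx
  calc |x + cos t| ≤ |x| + |cos t| := abs_add_le _ _
    _ ≤ |u| + 2 := by linarith [abs_cos_le_one t, abs_sub_abs_le_abs_sub x u]

lemma hasDerivAt_laplaceIntegral (n : ℕ) (u : ℝ) :
    HasDerivAt (laplaceIntegral n) (n * laplaceIntegral (n - 1) u) u := by
  have hF' (t x : ℝ) : HasDerivAt (fun x => (x + cos t) ^ n) (n * (x + cos t) ^ (n - 1)) x := by
    simpa using ((hasDerivAt_id x).add_const (cos t)).fun_pow n
  have h := hasDerivAt_integral_of_dominated_loc_of_deriv_le (μ := volume)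
    (F' := fun x t => n * (x + cos t) ^ (n - 1)) (bound := fun _ => n * (|u| + 2) ^ (n - 1))
    (Metric.ball_mem_nhds u one_pos)
    (.of_forall fun x => (continuous_add_cos_pow n x).aestronglyMeasurable)
    ((continuous_add_cos_pow n u).intervalIntegrable 0 π)
    ((continuous_add_cos_pow _ u).const_mul _).aestronglyMeasurable
    (.of_forall fun t _ x hx => by
      rw [norm_mul, norm_pow, Real.norm_natCast, Real.norm_eq_abs]
      gcongr
      exact abs_add_cos_le hx t)
    intervalIntegrable_const
    (.of_forall fun t _ x _ => hF' t x)
  rw [laplaceIntegral, ← integral_const_mul]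
  exact h.2

lemma hasDerivAt_sin_mul_add_cos_pow (n : ℕ) (u t : ℝ) :
    HasDerivAt (fun t => sin t * (u + cos t) ^ n)
      ((n + 1) * (u + cos t) ^ (n + 1) - (2 * n + 1) * u * (u + cos t) ^ n
        + n * (u ^ 2 - 1) * (u + cos t) ^ (n - 1)) t := by
  refine ((hasDerivAt_sin t).fun_mul (((hasDerivAt_cos t).const_add u).fun_pow n)).congr_deriv ?_
  rcases n with _ | n
  · simp
  · simp only [Nat.add_sub_cancel, pow_succ]
    push_cast
    linear_combination (-(n + 1 : ℝ) * (u + cos t) ^ n) * sin_sq_add_cos_sq t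

lemma succ_mul_laplaceIntegral_succ (n : ℕ) (u : ℝ) :
    (n + 1) * laplaceIntegral (n + 1) u
      = (2 * n + 1) * u * laplaceIntegral n u - n * (u ^ 2 - 1) * laplaceIntegral (n - 1) u := by
  have hint (k : ℕ) := (continuous_add_cos_pow k u).intervalIntegrable (μ := volume) 0 π
  have h := integral_eq_sub_of_hasDerivAt (fun t _ => hasDerivAt_sin_mul_add_cos_pow n u t)
    ((((hint _).const_mul _).sub ((hint _).const_mul _)).add ((hint _).const_mul _))
  rw [integral_add (((hint _).const_mul _).sub ((hint _).const_mul _)) ((hint _).const_mul _),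
    integral_sub ((hint _).const_mul _) ((hint _).const_mul _)] at h
  simp only [integral_const_mul, sin_pi, sin_zero, zero_mul, sub_zero] at h
  simp only [laplaceIntegral]
  linarith

noncomputable def sinhDeriv (f : ℝ → ℝ) (x : ℝ) : ℝ := -(1 / sinh x) * deriv f x

lemma Filter.EventuallyEq.sinhDeriv_eq {f g : ℝ → ℝ} {x : ℝ} (h : f =ᶠ[nhds x] g) :
    sinhDeriv f x = sinhDeriv g x := by
  rw [sinhDeriv, sinhDeriv, h.deriv_eq]

noncomputable def sinhDerivClosedForm (k : ℕ) (x : ℝ) : ℝ :=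
  k ! / π * laplaceIntegral k (cosh x) / sinh x ^ (2 * k + 1)

lemma sinhDerivClosedForm_zero : sinhDerivClosedForm 0 = fun x => 1 / sinh x := by
  ext x
  simp [sinhDerivClosedForm, laplaceIntegral_zero, pi_ne_zero]

lemma sinhDeriv_sinhDerivClosedForm (k : ℕ) {x : ℝ} (hx : x ≠ 0) :
    sinhDeriv (sinhDerivClosedForm k) x = sinhDerivClosedForm (k + 1) x := by
  have hs : sinh x ≠ 0 := sinh_ne_zero.2 hx
  have hnum := ((hasDerivAt_laplaceIntegral k (cosh x)).comp x (hasDerivAt_cosh x)).const_mul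
    (k ! / π)
  have hden := (hasDerivAt_sinh x).fun_pow (2 * k + 1)
  have hF : HasDerivAt (sinhDerivClosedForm k) _ x := hnum.fun_div hden (pow_ne_zero _ hs)
  have hrec := succ_mul_laplaceIntegral_succ k (cosh x)
  rw [cosh_sq', add_sub_cancel_left] at hrec
  rw [sinhDeriv, hF.deriv]
  simp only [sinhDerivClosedForm, Function.comp_def, factorial_succ, Nat.add_sub_cancel]
  rw [pow_succ _ (2 * k), show 2 * (k + 1) + 1 = 2 * k + 3 by ring, pow_add]
  push_cast
  field_simp
  linear_combination -hrec

lemma iterate_sinhDeriv_inv_sinh (k : ℕ) {x : ℝ} (hx : x ≠ 0) :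
    sinhDeriv^[k] (fun x => 1 / sinh x) x = sinhDerivClosedForm k x := by
  induction k generalizing x with
  | zero => rw [Function.iterate_zero_apply, sinhDerivClosedForm_zero]
  | succ k ih =>
    have hloc : sinhDeriv^[k] (fun x => 1 / sinh x) =ᶠ[nhds x] sinhDerivClosedForm k :=
      (eventually_ne_nhds hx).mono fun y hy => ih hy
    rw [Function.iterate_succ_apply', hloc.sinhDeriv_eq, sinhDeriv_sinhDerivClosedForm k hx]

/-- Lemma 3.1 of the paper: the (m-1)-fold iterate of `D f ρ = -(1/sinh ρ) f'(ρ)`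
applied to `1/sinh` has the closed form
`(Γ(m)/π) (sinh ρ)^{-(2m-1)} ∫₀^π (cosh ρ + cos t)^{m-1} dt`. -/
theorem iterate_sinh_inv (m : ℕ) (hm : 1 ≤ m) (ρ : ℝ) (hρ : 0 < ρ) :
    (fun f : ℝ → ℝ => fun x => -(1 / Real.sinh x) * deriv f x)^[m - 1]
        (fun x => 1 / Real.sinh x) ρ
      = (Real.Gamma (m : ℝ) / Real.pi) * (1 / Real.sinh ρ ^ (2 * m - 1)) *
        ∫ t in (0 : ℝ)..Real.pi, (Real.cosh ρ + Real.cos t) ^ (m - 1) := by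
  obtain ⟨k, rfl⟩ : ∃ k, m = k + 1 := ⟨m - 1, by omega⟩
  have h2m : 2 * (k + 1) - 1 = 2 * k + 1 := by omega
  rw [Nat.add_sub_cancel, h2m, Nat.cast_add_one, Gamma_nat_eq_factorial]
  refine (iterate_sinhDeriv_inv_sinh k hρ.ne').trans ?_
  rw [sinhDerivClosedForm, laplaceIntegral]
  ring
end

section
/- Let m > k ≥ 0 be integers and let ρ > 0 be real. Then ∫_0^π (cosh ρ + cos t)^{m-1-k} (sin t)^{2k} dt = ∑_{j=0}^{m-1-k} [Γ(m-k)/(Γ(j+1)Γ(m-k-j))] · (2 sinh²(ρ/2))^j · 2^{m+k-1-j} · Γ(m-j-1/2) · Γ(k+1/2) / Γ(m+k-j). -/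
/-! Writing `cosh ρ = 1 + 2 sinh² (ρ/2)` and `sin² t = (1 + cos t)(1 - cos t)`, the binomial theorem
reduces the integral to `J(a, b) = ∫₀^π (1 + cos t)^a (1 - cos t)^b dt`. Differentiating
`sin t · (1 + cos t)^a (1 - cos t)^b` and integrating over `[0, π]` gives
`(a + b + 1) J(a + 1, b) = (2a + 1) J(a, b)`; together with the symmetry `t ↦ π - t` and
`J(0, 0) = π` this pins down `J(a, b) = 2^(a+b) Γ(a + 1/2) Γ(b + 1/2) / Γ(a + b + 1)`. -/

open Real Finset intervalIntegral

noncomputable def cosPowIntegral (a b : ℕ) : ℝ :=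
  ∫ t in (0 : ℝ)..π, (1 + cos t) ^ a * (1 - cos t) ^ b

theorem cosPowIntegral_comm (a b : ℕ) : cosPowIntegral a b = cosPowIntegral b a := by
  have h := integral_comp_sub_left (a := 0) (b := π)
    (fun t ↦ (1 + cos t) ^ a * (1 - cos t) ^ b) π
  simp only [sub_zero, sub_self, cos_pi_sub] at h
  rw [cosPowIntegral, ← h, cosPowIntegral]
  congr 1 with t
  ring

theorem cosPowIntegral_zero_zero : cosPowIntegral 0 0 = π := by
  simp [cosPowIntegral]

theorem natCast_mul_pow_sub_one_mul {R : Type*} [CommSemiring R] (n : ℕ) (x : R) :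
    (n : R) * x ^ (n - 1) * x = n * x ^ n := by
  cases n with
  | zero => simp
  | succ n => rw [Nat.add_sub_cancel, mul_assoc, ← pow_succ]

theorem hasDerivAt_sin_mul_cosPow (a b : ℕ) (t : ℝ) :
    HasDerivAt (fun t ↦ sin t * ((1 + cos t) ^ a * (1 - cos t) ^ b))
      ((1 + cos t) ^ a * (1 - cos t) ^ b * ((a + b + 1) * (1 + cos t) - (2 * a + 1))) t := by
  have hu := ((hasDerivAt_cos t).const_add 1).pow a
  have hv := ((hasDerivAt_cos t).const_sub 1).pow b
  refine ((hasDerivAt_sin t).mul (hu.mul hv)).congr_deriv ?_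
  simp only [Pi.mul_apply, Pi.pow_apply]
  -- `sin² t = (1 + cos t)(1 - cos t)` absorbs the lowered exponents `a - 1` and `b - 1`.
  have hsin : sin t ^ 2 = (1 + cos t) * (1 - cos t) := by rw [sin_sq]; ring
  have ha := natCast_mul_pow_sub_one_mul a (1 + cos t)
  have hb := natCast_mul_pow_sub_one_mul b (1 - cos t)
  linear_combination (-(1 - cos t) ^ b * (1 - cos t)) * ha
    + ((1 + cos t) ^ a * (1 + cos t)) * hb
    + ((b : ℝ) * (1 + cos t) ^ a * (1 - cos t) ^ (b - 1)
      - (a : ℝ) * (1 + cos t) ^ (a - 1) * (1 - cos t) ^ b) * hsin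

theorem continuous_cosPow (a b : ℕ) : Continuous fun t ↦ (1 + cos t) ^ a * (1 - cos t) ^ b := by
  fun_prop

theorem cosPowIntegral_succ_left (a b : ℕ) :
    ((a : ℝ) + b + 1) * cosPowIntegral (a + 1) b = (2 * a + 1) * cosPowIntegral a b := by
  have hint := integral_eq_sub_of_hasDerivAt (fun t _ ↦ hasDerivAt_sin_mul_cosPow a b t)
    (by apply Continuous.intervalIntegrable; fun_prop) (a := 0) (b := π)
  simp only [sin_pi, sin_zero, zero_mul, sub_zero] at hint
  have hsplit : ∀ t : ℝ,
      (1 + cos t) ^ a * (1 - cos t) ^ b * ((a + b + 1) * (1 + cos t) - (2 * a + 1))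
      = ((a : ℝ) + b + 1) * ((1 + cos t) ^ (a + 1) * (1 - cos t) ^ b)
        - (2 * a + 1) * ((1 + cos t) ^ a * (1 - cos t) ^ b) := fun t ↦ by ring
  simp only [hsplit] at hint
  rwa [integral_sub ((continuous_cosPow _ _).intervalIntegrable _ _ |>.const_mul _)
    ((continuous_cosPow _ _).intervalIntegrable _ _ |>.const_mul _),
    integral_const_mul, integral_const_mul, sub_eq_zero] at hint

theorem eq_of_symm_of_succ_left {f g : ℕ → ℕ → ℝ} (hf : ∀ a b, f a b = f b a)
    (hg : ∀ a b, g a b = g b a)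
    (hf_succ : ∀ a b : ℕ, ((a : ℝ) + b + 1) * f (a + 1) b = (2 * a + 1) * f a b)
    (hg_succ : ∀ a b : ℕ, ((a : ℝ) + b + 1) * g (a + 1) b = (2 * a + 1) * g a b)
    (h₀ : f 0 0 = g 0 0) : f = g := by
  have hstep : ∀ a b, f a b = g a b → f (a + 1) b = g (a + 1) b := fun a b h ↦
    mul_left_cancel₀ (a := (a : ℝ) + b + 1) (by positivity) (by rw [hf_succ, hg_succ, h])
  have hzero : ∀ b, f 0 b = g 0 b := by
    intro b
    induction b with
    | zero => exact h₀
    | succ b ih => rw [hf, hg]; exact hstep b 0 (by rw [hf, hg, ih])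
  funext a b
  induction a with
  | zero => exact hzero b
  | succ a ih => exact hstep a b ih

theorem cosPowIntegral_eq (a b : ℕ) :
    cosPowIntegral a b =
      2 ^ (a + b) * Gamma (a + 1 / 2) * Gamma (b + 1 / 2) / Gamma (a + b + 1) := by
  suffices cosPowIntegral =
      fun p q : ℕ ↦ 2 ^ (p + q) * Gamma (p + 1 / 2) * Gamma (q + 1 / 2) / Gamma (p + q + 1) by
    rw [this]
  refine eq_of_symm_of_succ_left cosPowIntegral_comm
    (fun p q ↦ by rw [add_comm q, add_comm (q : ℝ) p, mul_right_comm (2 ^ _)])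
    cosPowIntegral_succ_left (fun p q ↦ ?_) ?_
  · have hΓ : Gamma ((p : ℝ) + q + 1) ≠ 0 := (Gamma_pos_of_pos (by positivity)).ne'
    push_cast
    rw [show (p : ℝ) + 1 + 1 / 2 = (p + 1 / 2) + 1 by ring, Gamma_add_one (by positivity),
      show (p : ℝ) + 1 + q + 1 = (p + q + 1) + 1 by ring, Gamma_add_one (by positivity),
      add_right_comm p, pow_succ]
    field_simp
  · simp only [cosPowIntegral_zero_zero, Nat.cast_zero, zero_add, add_zero, pow_zero, one_mul,
      Gamma_one, div_one, Gamma_one_half_eq, mul_self_sqrt pi_pos.le]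

theorem add_cos_pow_mul_sin_pow_eq_sum (c t : ℝ) (M k : ℕ) :
    (c + cos t) ^ M * sin t ^ (2 * k) = ∑ j ∈ range (M + 1),
      (c - 1) ^ j * M.choose j * ((1 + cos t) ^ (M - j + k) * (1 - cos t) ^ k) := by
  have hsin : sin t ^ (2 * k) = (1 + cos t) ^ k * (1 - cos t) ^ k := by
    rw [pow_mul, ← mul_pow, sin_sq]
    ring
  rw [show c + cos t = (c - 1) + (1 + cos t) by ring, add_pow, hsin, sum_mul]
  refine sum_congr rfl fun j _ ↦ ?_
  rw [pow_add]
  ring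

theorem integral_add_cos_pow_mul_sin_pow (c : ℝ) (M k : ℕ) :
    ∫ t in (0 : ℝ)..π, (c + cos t) ^ M * sin t ^ (2 * k) =
      ∑ j ∈ range (M + 1), (c - 1) ^ j * M.choose j * cosPowIntegral (M - j + k) k := by
  simp only [add_cos_pow_mul_sin_pow_eq_sum]
  rw [integral_finsetSum fun j _ ↦ (continuous_cosPow _ _).intervalIntegrable _ _ |>.const_mul _]
  simp only [integral_const_mul, cosPowIntegral]

theorem Gamma_div_Gamma_mul_Gamma_eq_choose (i j : ℕ) :
    Gamma ((i : ℝ) + j + 1) / (Gamma (j + 1) * Gamma (i + 1)) = (i + j).choose j := by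
  rw [← Nat.choose_symm_add, Nat.cast_add_choose, ← Nat.cast_add, Gamma_nat_eq_factorial,
    Gamma_nat_eq_factorial, Gamma_nat_eq_factorial, mul_comm]

theorem cosh_cos_integral_expansion_general (m k : ℕ) (hk : k < m) (ρ : ℝ) :
    ∫ t in (0 : ℝ)..Real.pi, (Real.cosh ρ + Real.cos t) ^ (m - 1 - k) * Real.sin t ^ (2 * k)
      = ∑ j ∈ Finset.range (m - k),
          Real.Gamma ((m : ℝ) - k) /
              (Real.Gamma ((j : ℝ) + 1) * Real.Gamma ((m : ℝ) - k - j)) *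
            (2 * Real.sinh (ρ / 2) ^ 2) ^ j *
            (2 : ℝ) ^ ((m : ℝ) + k - 1 - j) *
            Real.Gamma ((m : ℝ) - j - 1 / 2) * Real.Gamma ((k : ℝ) + 1 / 2) /
            Real.Gamma ((m : ℝ) + k - j) := by
  have hcosh : cosh ρ - 1 = 2 * sinh (ρ / 2) ^ 2 := by
    have h := cosh_two_mul (ρ / 2)
    rw [mul_div_cancel₀ ρ two_ne_zero, cosh_sq] at h
    linarith
  obtain ⟨M, rfl⟩ : ∃ M, m = M + k + 1 := ⟨m - k - 1, by omega⟩
  rw [show M + k + 1 - 1 - k = M by omega, show M + k + 1 - k = M + 1 by omega,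
    integral_add_cos_pow_mul_sin_pow, hcosh]
  refine sum_congr rfl fun j hj ↦ ?_
  obtain ⟨i, rfl⟩ : ∃ i, M = i + j := ⟨M - j, by simp only [mem_range] at hj; omega⟩
  push_cast
  rw [Nat.add_sub_cancel, cosPowIntegral_eq, ← Gamma_div_Gamma_mul_Gamma_eq_choose,
    show (i : ℝ) + j + k + 1 - k = i + j + 1 by ring,
    show (i : ℝ) + j + 1 - j = i + 1 by ring,
    show (i : ℝ) + j + k + 1 + k - 1 - j = ((i + k + k : ℕ) : ℝ) by push_cast; ring, rpow_natCast,
    show (i : ℝ) + j + k + 1 - j - 1 / 2 = i + k + 1 / 2 by ring,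
    show (i : ℝ) + j + k + 1 + k - j = i + k + k + 1 by ring]
  push_cast
  ring

/-- The computational core of Lemma 4.1 of the paper: for integers `m > k ≥ 0` and `ρ > 0`,
`∫₀^π (cosh ρ + cos t)^{m-1-k} (sin t)^{2k} dt` expands as a finite sum of Gamma factors
times powers of `sinh²(ρ/2)`. -/
theorem cosh_cos_integral_expansion (m k : ℕ) (hk : k < m) (ρ : ℝ) (hρ : 0 < ρ) :
    ∫ t in (0 : ℝ)..Real.pi, (Real.cosh ρ + Real.cos t) ^ (m - 1 - k) * Real.sin t ^ (2 * k)
      = ∑ j ∈ Finset.range (m - k),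
          Real.Gamma ((m : ℝ) - k) /
              (Real.Gamma ((j : ℝ) + 1) * Real.Gamma ((m : ℝ) - k - j)) *
            (2 * Real.sinh (ρ / 2) ^ 2) ^ j *
            (2 : ℝ) ^ ((m : ℝ) + k - 1 - j) *
            Real.Gamma ((m : ℝ) - j - 1 / 2) * Real.Gamma ((k : ℝ) + 1 / 2) /
            Real.Gamma ((m : ℝ) + k - j) :=
  cosh_cos_integral_expansion_general m k hk ρ
end

section
/- Let m ≥ 1 be an integer and λ ∈ ℝ. Then ∏_{j=1}^{m} ((2j-1)² + λ²) − ∏_{j=1}^{m} (2j-1)² ≥ λ² · ∏_{j=1}^{m-1} (j² + λ²). -/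
open Finset

/-! Let `P`, `Q` be the products over `j < m` with and without the shift `λ²`. Splitting off the
factor `j = m`, with `a = (2m - 1)²`, the left side is `(a + λ²) P - a Q = a (P - Q) + λ² P ≥ λ² P`,
and `P` dominates the right-hand product because `(2j - 1)² ≥ j²` for `j ≥ 1`. -/

theorem Finset.mul_prod_add_le_prod_insert_add_sub_prod {ι R : Type*} [CommRing R]
    [PartialOrder R] [IsOrderedRing R] [DecidableEq ι] {s : Finset ι} {k : ι} (hk : k ∉ s)
    {f : ι → R} {c : R} (hf : ∀ i ∈ insert k s, 0 ≤ f i) (hc : 0 ≤ c) :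
    c * ∏ i ∈ s, (f i + c) ≤ ∏ i ∈ insert k s, (f i + c) - ∏ i ∈ insert k s, f i := by
  have hfs : ∀ i ∈ s, 0 ≤ f i := fun i hi => hf i (mem_insert_of_mem hi)
  have hfk : 0 ≤ f k := hf k (mem_insert_self k s)
  have hmono : ∏ i ∈ s, f i ≤ ∏ i ∈ s, (f i + c) :=
    prod_le_prod hfs fun i _ => le_add_of_nonneg_right hc
  rw [prod_insert hk, prod_insert hk, le_sub_iff_add_le]
  calc c * ∏ i ∈ s, (f i + c) + f k * ∏ i ∈ s, f i
      ≤ c * ∏ i ∈ s, (f i + c) + f k * ∏ i ∈ s, (f i + c) := by gcongr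
    _ = (f k + c) * ∏ i ∈ s, (f i + c) := by ring

theorem sq_le_two_mul_sub_one_sq {R : Type*} [CommRing R] [LinearOrder R] [IsStrictOrderedRing R]
    {x : R} (hx : 1 ≤ x) : x ^ 2 ≤ (2 * x - 1) ^ 2 := by
  nlinarith

/-- Inequality (4.17) of the paper (spectral comparison):
`∏_{j=1}^m ((2j-1)² + λ²) − ∏_{j=1}^m (2j-1)² ≥ λ² ∏_{j=1}^{m-1} (j² + λ²)`. -/
theorem product_spectral_comparison (m : ℕ) (hm : 1 ≤ m) (lam : ℝ) :
    (∏ j ∈ Finset.Icc 1 m, ((2 * (j : ℝ) - 1) ^ 2 + lam ^ 2))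
        - ∏ j ∈ Finset.Icc 1 m, (2 * (j : ℝ) - 1) ^ 2
      ≥ lam ^ 2 * ∏ j ∈ Finset.Icc 1 (m - 1), ((j : ℝ) ^ 2 + lam ^ 2) := by
  have hm_notMem : m ∉ Icc 1 (m - 1) := by simp only [mem_Icc]; omega
  have hodd : ∏ j ∈ Icc 1 (m - 1), ((j : ℝ) ^ 2 + lam ^ 2)
      ≤ ∏ j ∈ Icc 1 (m - 1), ((2 * (j : ℝ) - 1) ^ 2 + lam ^ 2) :=
    prod_le_prod (fun j _ => by positivity) fun j hj =>
      add_le_add_left (sq_le_two_mul_sub_one_sq (by exact_mod_cast (mem_Icc.mp hj).1)) _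
  rw [← insert_Icc_sub_one_right_eq_Icc hm]
  calc lam ^ 2 * ∏ j ∈ Icc 1 (m - 1), ((j : ℝ) ^ 2 + lam ^ 2)
      ≤ lam ^ 2 * ∏ j ∈ Icc 1 (m - 1), ((2 * (j : ℝ) - 1) ^ 2 + lam ^ 2) :=
        mul_le_mul_of_nonneg_left hodd (sq_nonneg lam)
    _ ≤ _ := mul_prod_add_le_prod_insert_add_sub_prod hm_notMem (fun _ _ => sq_nonneg _)
        (sq_nonneg lam)
end

section
/- Let k, n be integers with 2 ≤ k < n/2 and let 0 < δ < 1 be fixed. For ε > 0 define F_ε : B_δ → ℝ on the ball B_δ = {x ∈ ℝ^n : |x| < δ} by F_ε(x) = (2/(ε+|x|²))^{(n-2k)/2} − (2/(δ²+ε))^{(n-2k)/2} · ∑_{j=0}^{k-1} [Γ(j+(n-2k)/2)/(Γ(j+1)Γ((n-2k)/2))] · ((δ²−|x|²)/(δ²+ε))^j. Then there exist constants C > 0 and ε₀ > 0 such that for all 0 < ε < ε₀, ∫_{B_δ} |F_ε(x)|^{2n/(n-2k)} dx ≥ ε^{-n/2} ( ω_n − C ε^{(n-2k)/2} ), where ω_n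 = 2π^{(n+1)/2}/Γ((n+1)/2) = ∫_{ℝ^n} (2/(1+|x|²))^n dx. -/
/-!
Write `U = 2 / (ε + |x|²)`, `p = (n - 2k)/2` and `q = 2n/(n - 2k)`, so that `F_ε = U^p - S`.
On `B_δ` the subtracted Taylor polynomial satisfies `0 ≤ S ≤ M` with `M` independent of `ε`, and
the tangent line of the convex function `t ↦ t^q` at `U^p` gives
`|U^p - S|^q ≥ U^n - q M U^σ` with `σ = (n + 2k)/2`.
The substitution `x = √ε y` gives `∫_{ℝⁿ} U^s = ε^{n/2 - s} ∫_{ℝⁿ} (2/(1+|y|²))^s` whenever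
`n < 2s`. For `s = n` the part outside `B_δ` is at most `T = ∫_{|x| ≥ δ} (2/|x|²)^n`, independent
of `ε`, and `∫_{ℝⁿ} (2/(1+|y|²))^n = ω_n` is a Beta integral combined with Legendre's duplication
formula; for `s = σ` the whole integral is `ε^{-k} J`. Hence
`∫_{B_δ} |F_ε|^q ≥ ε^{-n/2} ω_n - T - q M J ε^{-k}`, and `ε^{-k} = ε^{-n/2} ε^{(n-2k)/2}`.
-/

open MeasureTheory Real Finset Module Metric

theorem rpow_sub_mul_le_abs_sub_rpow {a s q : ℝ} (ha : 0 ≤ a) (hs : 0 ≤ s) (hq : 1 ≤ q) :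
    a ^ q - q * s * a ^ (q - 1) ≤ |a - s| ^ q := by
  rcases le_or_gt a s with has | hsa
  · have hsplit : a ^ q = a ^ (q - 1) * a := by
      conv_lhs => rw [← sub_add_cancel q 1]
      rw [rpow_add' ha (by linarith), rpow_one]
    have : a ≤ q * s := has.trans (le_mul_of_one_le_left hs hq)
    nlinarith [rpow_nonneg ha (q - 1), rpow_nonneg (abs_nonneg (a - s)) q]
  · have ha0 : 0 < a := hs.trans_lt hsa
    have hsa1 : s / a ≤ 1 := (div_le_one ha0).mpr hsa.le
    have hbern : 1 + q * -(s / a) ≤ (1 + -(s / a)) ^ q :=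
      one_add_mul_self_le_rpow_one_add (neg_le_neg hsa1) hq
    calc a ^ q - q * s * a ^ (q - 1) = a ^ q * (1 + q * -(s / a)) := by
          rw [rpow_sub_one ha0.ne']; field_simp; ring
      _ ≤ a ^ q * (1 + -(s / a)) ^ q := mul_le_mul_of_nonneg_left hbern (by positivity)
      _ = |a - s| ^ q := by
          rw [← mul_rpow ha0.le (by linarith), abs_of_pos (sub_pos.mpr hsa)]
          congr 1; field_simp; ring

theorem integral_Ioo_rpow_mul_one_sub_rpow {a b : ℝ} (ha : 0 < a) (hb : 0 < b) :
    ∫ t in Set.Ioo (0 : ℝ) 1, t ^ (a - 1) * (1 - t) ^ (b - 1)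
      = Gamma a * Gamma b / Gamma (a + b) := by
  apply Complex.ofReal_injective
  push_cast
  rw [← Complex.Gamma_ofReal, ← Complex.Gamma_ofReal, ← Complex.Gamma_ofReal, Complex.ofReal_add,
    ← Complex.betaIntegral_eq_Gamma_mul_div _ _ (by simpa) (by simpa), Complex.betaIntegral,
    ← integral_Ioc_eq_integral_Ioo, ← intervalIntegral.integral_of_le zero_le_one,
    ← intervalIntegral.integral_ofReal]
  refine intervalIntegral.integral_congr fun t ht => ?_
  rw [Set.uIcc_of_le zero_le_one] at ht
  push_cast
  rw [Complex.ofReal_cpow ht.1, Complex.ofReal_cpow (sub_nonneg.mpr ht.2)]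
  push_cast
  ring

theorem image_inv_one_add_sq_Ioi :
    (fun y : ℝ => (1 + y ^ 2)⁻¹) '' Set.Ioi 0 = Set.Ioo 0 1 := by
  ext t
  constructor
  · rintro ⟨y, hy, rfl⟩
    have : (1 : ℝ) < 1 + y ^ 2 := by have := pow_pos (Set.mem_Ioi.mp hy) 2; linarith
    exact ⟨by positivity, inv_lt_one_of_one_lt₀ this⟩
  · rintro ⟨ht0, ht1⟩
    have h : 0 < t⁻¹ - 1 := sub_pos.mpr (one_lt_inv₀ ht0 |>.mpr ht1)
    refine ⟨√(t⁻¹ - 1), sqrt_pos.mpr h, ?_⟩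
    simp only [sq_sqrt h.le, add_sub_cancel, inv_inv]

theorem integral_Ioi_rpow_mul_one_add_sq_rpow {c : ℝ} (hc : 0 < c) :
    ∫ y in Set.Ioi (0 : ℝ), y ^ (2 * c - 1) * (1 + y ^ 2) ^ (-(2 * c))
      = Gamma c ^ 2 / (2 * Gamma (2 * c)) := by
  have hderiv : ∀ y ∈ Set.Ioi (0 : ℝ), HasDerivWithinAt (fun y : ℝ => (1 + y ^ 2)⁻¹)
      (-(2 * y) / (1 + y ^ 2) ^ 2) (Set.Ioi 0) y := fun y _ => by
    have h := ((hasDerivAt_pow 2 y).const_add 1).inv (by positivity : (1 : ℝ) + y ^ 2 ≠ 0)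
    rw [show -(2 * y) / (1 + y ^ 2) ^ 2 = -((2 : ℕ) * y ^ (2 - 1)) / (1 + y ^ 2) ^ 2 by norm_num]
    exact h.hasDerivWithinAt
  have hinj : Set.InjOn (fun y : ℝ => (1 + y ^ 2)⁻¹) (Set.Ioi 0) := by
    intro y₁ h₁ y₂ h₂ h
    have : y₁ ^ 2 = y₂ ^ 2 := by simpa using h
    exact (pow_left_inj₀ (le_of_lt h₁) (le_of_lt h₂) two_ne_zero).mp this
  have hsub := integral_image_eq_integral_abs_deriv_smul measurableSet_Ioi hderiv hinj
    (fun t => t ^ (c - 1) * (1 - t) ^ (c - 1))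
  rw [image_inv_one_add_sq_Ioi, integral_Ioo_rpow_mul_one_sub_rpow hc hc, ← two_mul] at hsub
  have hpt : ∀ y ∈ Set.Ioi (0 : ℝ), |-(2 * y) / (1 + y ^ 2) ^ 2| •
      ((1 + y ^ 2)⁻¹ ^ (c - 1) * (1 - (1 + y ^ 2)⁻¹) ^ (c - 1))
        = 2 * (y ^ (2 * c - 1) * (1 + y ^ 2) ^ (-(2 * c))) := by
    intro y hy
    have hy : 0 < y := hy
    have hA : 0 < 1 + y ^ 2 := by positivity
    rw [smul_eq_mul, abs_div, abs_neg, abs_of_pos (by positivity), abs_of_pos (by positivity),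
      show 1 - (1 + y ^ 2)⁻¹ = y ^ 2 * (1 + y ^ 2)⁻¹ by field_simp; ring,
      mul_rpow (by positivity) (by positivity), inv_rpow hA.le, ← rpow_natCast_mul hy.le,
      show 2 * c - 1 = 1 + (2 : ℕ) * (c - 1) by push_cast; ring, rpow_add hy, rpow_one,
      show 2 * c = (2 : ℕ) + (c - 1 + (c - 1)) by push_cast; ring, rpow_neg hA.le,
      rpow_add hA, rpow_add hA, rpow_natCast]
    field_simp
  rw [setIntegral_congr_fun measurableSet_Ioi hpt, integral_const_mul] at hsub
  rw [show Gamma c ^ 2 / (2 * Gamma (2 * c)) = Gamma c * Gamma c / Gamma (2 * c) / 2 by ring, hsub]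
  ring

section

variable {E : Type*} [NormedAddCommGroup E] [InnerProductSpace ℝ E] [FiniteDimensional ℝ E]
  [MeasurableSpace E] [BorelSpace E] [Nontrivial E]

theorem integral_two_div_one_add_norm_sq_rpow_finrank :
    ∫ x : E, (2 / (1 + ‖x‖ ^ 2)) ^ (finrank ℝ E : ℝ)
      = 2 * π ^ ((finrank ℝ E + 1 : ℝ) / 2) / Gamma ((finrank ℝ E + 1 : ℝ) / 2) := by
  set d := finrank ℝ E
  have hd0 : 0 < d := finrank_pos
  have hd : 0 < (d : ℝ) / 2 := by positivity
  have hprofile : ∫ y in Set.Ioi (0 : ℝ), y ^ (d - 1) • (2 / (1 + y ^ 2)) ^ (d : ℝ)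
      = 2 ^ (d : ℝ) * (Gamma (d / 2) ^ 2 / (2 * Gamma d)) := by
    have h := integral_Ioi_rpow_mul_one_add_sq_rpow hd
    rw [show 2 * ((d : ℝ) / 2) = d by ring] at h
    rw [← h, ← integral_const_mul]
    refine setIntegral_congr_fun measurableSet_Ioi fun y hy => ?_
    rw [smul_eq_mul, div_rpow zero_le_two (by positivity), rpow_neg (by positivity),
      ← rpow_natCast, Nat.cast_sub (by omega : 1 ≤ d), Nat.cast_one]
    ring
  have hball : volume.real (Metric.ball (0 : E) 1) = √π ^ d / Gamma (d / 2 + 1) := by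
    rw [measureReal_def, InnerProductSpace.volume_ball, ENNReal.ofReal_one, one_pow, one_mul,
      ENNReal.toReal_ofReal (by positivity)]
  have hlegendre := Gamma_mul_Gamma_add_half ((d : ℝ) / 2)
  rw [show (d : ℝ) / 2 + 1 / 2 = (d + 1) / 2 by ring, show 2 * ((d : ℝ) / 2) = d by ring]
    at hlegendre
  have hGd : 0 < Gamma d := Gamma_pos_of_pos (by linarith)
  have hGh : 0 < Gamma (((d : ℝ) + 1) / 2) := Gamma_pos_of_pos (by positivity)
  have hpi : √π ^ d * √π = π ^ (((d : ℝ) + 1) / 2) := by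
    rw [sqrt_eq_rpow, ← rpow_natCast, ← rpow_mul pi_nonneg, ← rpow_add pi_pos]
    ring_nf
  rw [integral_fun_norm_addHaar volume fun y => (2 / (1 + y ^ 2)) ^ (d : ℝ), hprofile, hball,
    Gamma_add_one hd.ne', nsmul_eq_mul, smul_eq_mul]
  calc (d : ℝ) * (√π ^ d / (d / 2 * Gamma (d / 2))
          * (2 ^ (d : ℝ) * (Gamma (d / 2) ^ 2 / (2 * Gamma d))))
      = √π ^ d * 2 ^ (d : ℝ) * (Gamma (d / 2) * Gamma ((d + 1) / 2)) / Gamma d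
          / Gamma ((d + 1) / 2) := by
        field_simp
    _ = 2 * π ^ (((d : ℝ) + 1) / 2) / Gamma ((d + 1) / 2) := by
        rw [hlegendre, ← hpi]
        field_simp
        rw [← rpow_add two_pos, add_sub_cancel, rpow_one]

end

theorem continuous_two_div_add_norm_sq_rpow {E : Type*} [SeminormedAddCommGroup E] {ε : ℝ}
    (hε : 0 < ε) (s : ℝ) :
    Continuous fun x : E => (2 / (ε + ‖x‖ ^ 2)) ^ s := by
  have hden (x : E) : 0 < ε + ‖x‖ ^ 2 := by positivity
  exact (continuous_const.div (by fun_prop) fun x => (hden x).ne').rpow_const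
    fun x => .inl (div_pos two_pos (hden x)).ne'

section

variable {E : Type*} [NormedAddCommGroup E] [NormedSpace ℝ E] [FiniteDimensional ℝ E]
  [MeasurableSpace E] [BorelSpace E] (μ : Measure E) [μ.IsAddHaarMeasure]

theorem integral_two_div_add_norm_sq_rpow {ε : ℝ} (hε : 0 < ε) (s : ℝ) :
    ∫ x, (2 / (ε + ‖x‖ ^ 2)) ^ s ∂μ
      = ε ^ ((finrank ℝ E : ℝ) / 2 - s) * ∫ x, (2 / (1 + ‖x‖ ^ 2)) ^ s ∂μ := by
  have hscale := Measure.integral_comp_smul μ (fun x => (2 / (ε + ‖x‖ ^ 2)) ^ s) √ε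
  have hpt : ∀ x : E, (2 / (ε + ‖√ε • x‖ ^ 2)) ^ s = ε ^ (-s) * (2 / (1 + ‖x‖ ^ 2)) ^ s := by
    intro x
    rw [norm_smul, mul_pow, norm_of_nonneg (sqrt_nonneg ε), sq_sqrt hε.le,
      show 2 / (ε + ε * ‖x‖ ^ 2) = ε⁻¹ * (2 / (1 + ‖x‖ ^ 2)) by field_simp,
      mul_rpow (by positivity) (by positivity), inv_rpow hε.le, rpow_neg hε.le]
  simp_rw [hpt, integral_const_mul, smul_eq_mul] at hscale
  have hd : (√ε ^ finrank ℝ E)⁻¹ = ε ^ (-((finrank ℝ E : ℝ) / 2)) := by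
    rw [sqrt_eq_rpow, ← rpow_natCast, ← rpow_mul hε.le, ← rpow_neg hε.le]
    ring_nf
  rw [hd, abs_of_pos (by positivity)] at hscale
  rw [sub_eq_add_neg, rpow_add hε, mul_assoc, hscale, ← mul_assoc, ← rpow_add hε]
  simp

variable {μ}

theorem integrableOn_compl_ball_two_div_add_norm_sq_rpow {ε δ s : ℝ} (hε : 0 ≤ ε) (hδ : 0 < δ)
    (hs : (finrank ℝ E : ℝ) < 2 * s) :
    IntegrableOn (fun x => (2 / (ε + ‖x‖ ^ 2)) ^ s) (ball (0 : E) δ)ᶜ μ := by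
  have hs0 : 0 < s := by linarith [(finrank ℝ E).cast_nonneg (α := ℝ)]
  have hdom := (integrable_rpow_neg_one_add_norm_sq (μ := μ) hs).const_mul
    ((2 * (1 + (δ ^ 2)⁻¹)) ^ s)
  refine hdom.integrableOn.mono'
    ((by fun_prop : Measurable fun x : E => 2 / (ε + ‖x‖ ^ 2)).pow_const s).aestronglyMeasurable ?_
  filter_upwards [ae_restrict_mem measurableSet_ball.compl] with x hx
  have hxδ : δ ≤ ‖x‖ := by simpa using hx
  have hx0 : 0 < ‖x‖ := hδ.trans_le hxδ
  have hxδ2 : 1 ≤ (δ ^ 2)⁻¹ * ‖x‖ ^ 2 := by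
    rw [inv_mul_eq_div, one_le_div (by positivity)]
    exact pow_le_pow_left₀ hδ.le hxδ 2
  have hbase : 2 / (ε + ‖x‖ ^ 2) ≤ 2 * (1 + (δ ^ 2)⁻¹) / (1 + ‖x‖ ^ 2) := by
    rw [div_le_div_iff₀ (by positivity) (by positivity)]
    have : 0 ≤ (1 + (δ ^ 2)⁻¹) * ε := by positivity
    linarith
  rw [norm_of_nonneg (by positivity), show -(2 * s) / 2 = -s by ring, rpow_neg (by positivity),
    ← div_eq_mul_inv, ← div_rpow (by positivity) (by positivity)]
  exact rpow_le_rpow (by positivity) hbase hs0.le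

theorem integrable_two_div_add_norm_sq_rpow {ε s : ℝ} (hε : 0 < ε)
    (hs : (finrank ℝ E : ℝ) < 2 * s) : Integrable (fun x => (2 / (ε + ‖x‖ ^ 2)) ^ s) μ := by
  have hball : IntegrableOn (fun x => (2 / (ε + ‖x‖ ^ 2)) ^ s) (ball (0 : E) 1) μ :=
    ((continuous_two_div_add_norm_sq_rpow hε s).continuousOn.integrableOn_compact
      (isCompact_closedBall 0 1)).mono_set ball_subset_closedBall
  rw [← integrableOn_univ, ← Set.union_compl_self (ball (0 : E) 1)]
  exact hball.union (integrableOn_compl_ball_two_div_add_norm_sq_rpow hε.le one_pos hs)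

theorem setIntegral_two_div_add_norm_sq_rpow_le {ε s : ℝ} (hε : 0 < ε)
    (hs : (finrank ℝ E : ℝ) < 2 * s) (A : Set E) :
    ∫ x in A, (2 / (ε + ‖x‖ ^ 2)) ^ s ∂μ
      ≤ ε ^ ((finrank ℝ E : ℝ) / 2 - s) * ∫ x, (2 / (1 + ‖x‖ ^ 2)) ^ s ∂μ := by
  rw [← integral_two_div_add_norm_sq_rpow μ hε]
  exact setIntegral_le_integral (integrable_two_div_add_norm_sq_rpow hε hs)
    (.of_forall fun x => by positivity)

theorem sub_le_setIntegral_ball_two_div_add_norm_sq_rpow {ε δ s : ℝ} (hε : 0 < ε) (hδ : 0 < δ)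
    (hs : (finrank ℝ E : ℝ) < 2 * s) :
    ε ^ ((finrank ℝ E : ℝ) / 2 - s) * ∫ x, (2 / (1 + ‖x‖ ^ 2)) ^ s ∂μ
        - ∫ x in (ball (0 : E) δ)ᶜ, (2 / ‖x‖ ^ 2) ^ s ∂μ
      ≤ ∫ x in ball (0 : E) δ, (2 / (ε + ‖x‖ ^ 2)) ^ s ∂μ := by
  have htail : ∫ x in (ball (0 : E) δ)ᶜ, (2 / (ε + ‖x‖ ^ 2)) ^ s ∂μ
      ≤ ∫ x in (ball (0 : E) δ)ᶜ, (2 / ‖x‖ ^ 2) ^ s ∂μ := by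
    refine setIntegral_mono_on (integrableOn_compl_ball_two_div_add_norm_sq_rpow hε.le hδ hs)
      (by simpa using integrableOn_compl_ball_two_div_add_norm_sq_rpow (μ := μ) le_rfl hδ hs)
      measurableSet_ball.compl fun x hx => ?_
    have hx0 : 0 < ‖x‖ := hδ.trans_le (by simpa using hx)
    exact rpow_le_rpow (by positivity) (div_le_div_of_nonneg_left zero_le_two (by positivity)
      (by linarith)) (by linarith [(finrank ℝ E).cast_nonneg (α := ℝ)])
  rw [← integral_two_div_add_norm_sq_rpow μ hε, ← integral_add_compl measurableSet_ball
    (integrable_two_div_add_norm_sq_rpow hε hs)]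
  exact (sub_le_sub_left htail _).trans_eq (add_sub_cancel_right _ _)

end

section

variable {E : Type*} [SeminormedAddCommGroup E] {p δ ε : ℝ} {k : ℕ}

/-- `(p)_j / j!`, the coefficient of `t ^ j` in `(1 - t) ^ (-p)`. -/
noncomputable def negBinomialCoeff (p : ℝ) (j : ℕ) : ℝ :=
  Gamma (j + p) / (Gamma (j + 1) * Gamma p)

theorem negBinomialCoeff_nonneg (hp : 0 < p) (j : ℕ) : 0 ≤ negBinomialCoeff p j := by
  unfold negBinomialCoeff
  positivity

/-- The paper's `F_ε`: as `(2 / (ε + |x|²)) ^ p = (2 / (δ² + ε)) ^ p * (1 - t) ^ (-p)` with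
`t = (δ² - |x|²) / (δ² + ε)`, the subtracted sum is its Taylor polynomial of degree `k - 1`
in `t`. -/
noncomputable def truncatedBubble (p : ℝ) (k : ℕ) (δ ε : ℝ) (x : E) : ℝ :=
  (2 / (ε + ‖x‖ ^ 2)) ^ p - (2 / (δ ^ 2 + ε)) ^ p * ∑ j ∈ range k,
    negBinomialCoeff p j * ((δ ^ 2 - ‖x‖ ^ 2) / (δ ^ 2 + ε)) ^ j

theorem continuous_truncatedBubble (hε : 0 < ε) :
    Continuous (truncatedBubble p k δ ε : E → ℝ) := by
  have := continuous_two_div_add_norm_sq_rpow (E := E) hε p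
  unfold truncatedBubble
  fun_prop

theorem rpow_sub_le_abs_truncatedBubble_rpow {q : ℝ} {x : E} (hp : 0 < p) (hq : 1 ≤ q)
    (hε : 0 ≤ ε) (hδ : 0 < δ) (hx : ‖x‖ ≤ δ) :
    (2 / (ε + ‖x‖ ^ 2)) ^ (p * q)
        - q * ((2 / δ ^ 2) ^ p * ∑ j ∈ range k, negBinomialCoeff p j)
          * (2 / (ε + ‖x‖ ^ 2)) ^ (p * (q - 1))
      ≤ |truncatedBubble p k δ ε x| ^ q := by
  have hx2 : ‖x‖ ^ 2 ≤ δ ^ 2 := pow_le_pow_left₀ (norm_nonneg x) hx 2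
  have ht0 : 0 ≤ (δ ^ 2 - ‖x‖ ^ 2) / (δ ^ 2 + ε) := div_nonneg (by linarith) (by positivity)
  have ht1 : (δ ^ 2 - ‖x‖ ^ 2) / (δ ^ 2 + ε) ≤ 1 := by
    rw [div_le_one (by positivity)]; linarith [sq_nonneg ‖x‖]
  have hc := negBinomialCoeff_nonneg hp
  have hS0 : 0 ≤ (2 / (δ ^ 2 + ε)) ^ p * ∑ j ∈ range k,
      negBinomialCoeff p j * ((δ ^ 2 - ‖x‖ ^ 2) / (δ ^ 2 + ε)) ^ j :=
    mul_nonneg (by positivity) (sum_nonneg fun j _ => mul_nonneg (hc j) (by positivity))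
  have hSM : (2 / (δ ^ 2 + ε)) ^ p * ∑ j ∈ range k,
        negBinomialCoeff p j * ((δ ^ 2 - ‖x‖ ^ 2) / (δ ^ 2 + ε)) ^ j
      ≤ (2 / δ ^ 2) ^ p * ∑ j ∈ range k, negBinomialCoeff p j := by
    gcongr with j
    · exact sum_nonneg fun j _ => mul_nonneg (hc j) (by positivity)
    · linarith
    · exact mul_le_of_le_one_right (hc j) (pow_le_one₀ ht0 ht1)
  have hU : 0 ≤ 2 / (ε + ‖x‖ ^ 2) := by positivity
  rw [rpow_mul hU, rpow_mul hU]
  calc _ ≤ ((2 / (ε + ‖x‖ ^ 2)) ^ p) ^ q - q * ((2 / (δ ^ 2 + ε)) ^ p * ∑ j ∈ range k,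
          negBinomialCoeff p j * ((δ ^ 2 - ‖x‖ ^ 2) / (δ ^ 2 + ε)) ^ j)
          * ((2 / (ε + ‖x‖ ^ 2)) ^ p) ^ (q - 1) := by gcongr
    _ ≤ |truncatedBubble p k δ ε x| ^ q :=
      rpow_sub_mul_le_abs_sub_rpow (by positivity) hS0 hq

end

section

variable {E : Type*} [NormedAddCommGroup E] [NormedSpace ℝ E] [FiniteDimensional ℝ E]
  [MeasurableSpace E] [BorelSpace E] {μ : Measure E} [μ.IsAddHaarMeasure]

theorem sub_le_setIntegral_ball_abs_truncatedBubble_rpow {p q δ ε : ℝ} {k : ℕ} (hp : 0 < p)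
    (hq : 1 ≤ q) (hd : (finrank ℝ E : ℝ) < 2 * (p * (q - 1))) (hδ : 0 < δ) (hε : 0 < ε) :
    ε ^ ((finrank ℝ E : ℝ) / 2 - p * q) * ∫ x, (2 / (1 + ‖x‖ ^ 2)) ^ (p * q) ∂μ
        - ∫ x in (ball (0 : E) δ)ᶜ, (2 / ‖x‖ ^ 2) ^ (p * q) ∂μ
        - q * ((2 / δ ^ 2) ^ p * ∑ j ∈ range k, negBinomialCoeff p j)
          * (ε ^ ((finrank ℝ E : ℝ) / 2 - p * (q - 1))
            * ∫ x, (2 / (1 + ‖x‖ ^ 2)) ^ (p * (q - 1)) ∂μ)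
      ≤ ∫ x in ball (0 : E) δ, |truncatedBubble p k δ ε x| ^ q ∂μ := by
  have hdq : (finrank ℝ E : ℝ) < 2 * (p * q) := by nlinarith
  have hUq := integrable_two_div_add_norm_sq_rpow (μ := μ) hε hdq
  have hUq1 := integrable_two_div_add_norm_sq_rpow (μ := μ) hε hd
  have hM : 0 ≤ (2 / δ ^ 2) ^ p * ∑ j ∈ range k, negBinomialCoeff p j :=
    mul_nonneg (by positivity) (sum_nonneg fun j _ => negBinomialCoeff_nonneg hp j)
  have hF : IntegrableOn (fun x => |truncatedBubble p k δ ε x| ^ q) (ball (0 : E) δ) μ :=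
    (((continuous_truncatedBubble hε).abs.rpow_const fun _ => .inr (by linarith)).continuousOn
      |>.integrableOn_compact (isCompact_closedBall 0 δ)).mono_set ball_subset_closedBall
  calc _ ≤ (∫ x in ball (0 : E) δ, (2 / (ε + ‖x‖ ^ 2)) ^ (p * q) ∂μ)
        - q * ((2 / δ ^ 2) ^ p * ∑ j ∈ range k, negBinomialCoeff p j)
          * ∫ x in ball (0 : E) δ, (2 / (ε + ‖x‖ ^ 2)) ^ (p * (q - 1)) ∂μ :=
        sub_le_sub (sub_le_setIntegral_ball_two_div_add_norm_sq_rpow hε hδ hdq)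
          (mul_le_mul_of_nonneg_left (setIntegral_two_div_add_norm_sq_rpow_le hε hd _)
            (by positivity))
    _ = ∫ x in ball (0 : E) δ, ((2 / (ε + ‖x‖ ^ 2)) ^ (p * q)
          - q * ((2 / δ ^ 2) ^ p * ∑ j ∈ range k, negBinomialCoeff p j)
            * (2 / (ε + ‖x‖ ^ 2)) ^ (p * (q - 1))) ∂μ := by
        rw [integral_sub hUq.integrableOn (hUq1.const_mul _).integrableOn, integral_const_mul]
    _ ≤ _ := setIntegral_mono_on (hUq.sub (hUq1.const_mul _)).integrableOn hF measurableSet_ball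
        fun x hx => rpow_sub_le_abs_truncatedBubble_rpow hp hq hε.le hδ (mem_ball_zero_iff.mp hx).le

end

theorem test_function_Lp_lower_bound_general (n k : ℕ) (hk : 2 ≤ k) (hkn : 2 * k < n)
    (δ : ℝ) (hδ0 : 0 < δ) :
    ∃ C > (0 : ℝ), ∃ ε₀ > (0 : ℝ), ∀ ε : ℝ, 0 < ε → ε < ε₀ →
      (∫ x in Metric.ball (0 : EuclideanSpace ℝ (Fin n)) δ,
          |(2 / (ε + ‖x‖ ^ 2)) ^ (((n : ℝ) - 2 * k) / 2) -
            (2 / (δ ^ 2 + ε)) ^ (((n : ℝ) - 2 * k) / 2) *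
              ∑ j ∈ Finset.range k,
                Real.Gamma ((j : ℝ) + ((n : ℝ) - 2 * k) / 2) /
                    (Real.Gamma ((j : ℝ) + 1) * Real.Gamma (((n : ℝ) - 2 * k) / 2)) *
                  ((δ ^ 2 - ‖x‖ ^ 2) / (δ ^ 2 + ε)) ^ j|
            ^ ((2 * (n : ℝ)) / ((n : ℝ) - 2 * k)))
        ≥ ε ^ (-(n : ℝ) / 2) *
          (2 * Real.pi ^ (((n : ℝ) + 1) / 2) / Real.Gamma (((n : ℝ) + 1) / 2)
            - C * ε ^ (((n : ℝ) - 2 * k) / 2)) := by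
  have : Nonempty (Fin n) := ⟨⟨0, by omega⟩⟩
  have hdim : (finrank ℝ (EuclideanSpace ℝ (Fin n)) : ℝ) = n := by simp
  have hnk : (0 : ℝ) < n - 2 * k := by
    have : (2 * k : ℝ) < n := by exact_mod_cast hkn
    linarith
  have hk0 : (0 : ℝ) < k := by exact_mod_cast (by omega : 0 < k)
  set p : ℝ := ((n : ℝ) - 2 * k) / 2
  set q : ℝ := 2 * (n : ℝ) / ((n : ℝ) - 2 * k)
  have hp : 0 < p := by simp only [p]; linarith
  have hq : 1 ≤ q := by simp only [q]; rw [le_div_iff₀ hnk]; linarith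
  have hpq : p * q = n := by simp only [p, q]; field_simp [hnk.ne']
  have hσ : (n : ℝ) / 2 - p * (q - 1) = -k := by simp only [p, q]; field_simp [hnk.ne']; ring
  have hω := integral_two_div_one_add_norm_sq_rpow_finrank (E := EuclideanSpace ℝ (Fin n))
  set M := (2 / δ ^ 2) ^ p * ∑ j ∈ range k, negBinomialCoeff p j
  set T := ∫ x in (ball (0 : EuclideanSpace ℝ (Fin n)) δ)ᶜ, (2 / ‖x‖ ^ 2) ^ (n : ℝ)
  set J := ∫ x : EuclideanSpace ℝ (Fin n), (2 / (1 + ‖x‖ ^ 2)) ^ (p * (q - 1))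
  have hT : 0 ≤ T := setIntegral_nonneg measurableSet_ball.compl fun x _ => by positivity
  have hJ : 0 ≤ J := integral_nonneg fun x => by positivity
  have hM : 0 ≤ M := mul_nonneg (by positivity) (sum_nonneg fun j _ => negBinomialCoeff_nonneg hp j)
  refine ⟨T + q * M * J + 1, by positivity, 1, one_pos, fun ε hε hε1 => ?_⟩
  have hF := sub_le_setIntegral_ball_abs_truncatedBubble_rpow (μ := volume) (k := k) hp hq
    (by rw [hdim]; linarith) hδ0 hε
  rw [hdim] at hω hF
  rw [hpq, hσ, hω, show (n : ℝ) / 2 - n = -n / 2 by ring] at hF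
  have hek : ε ^ (-(n : ℝ) / 2) * ε ^ p = ε ^ (-(k : ℝ)) := by
    rw [← rpow_add hε]; congr 1; simp only [p]; ring
  have hek1 : 1 ≤ ε ^ (-(k : ℝ)) := one_le_rpow_of_pos_of_le_one_of_nonpos hε hε1.le (by simp)
  refine ge_iff_le.mpr (le_trans ?_ hF)
  rw [mul_sub, mul_left_comm, hek]
  nlinarith [mul_le_mul_of_nonneg_left hek1 hT]

/-- The second estimate of Lemma 5.1 of the paper: lower bound for the
`2n/(n-2k)`-norm of the truncated Sobolev test function `F_ε` on the ball of radius `δ`. -/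
theorem test_function_Lp_lower_bound (n k : ℕ) (hk : 2 ≤ k) (hkn : 2 * k < n)
    (δ : ℝ) (hδ0 : 0 < δ) (hδ1 : δ < 1) :
    ∃ C > (0 : ℝ), ∃ ε₀ > (0 : ℝ), ∀ ε : ℝ, 0 < ε → ε < ε₀ →
      (∫ x in Metric.ball (0 : EuclideanSpace ℝ (Fin n)) δ,
          |(2 / (ε + ‖x‖ ^ 2)) ^ (((n : ℝ) - 2 * k) / 2) -
            (2 / (δ ^ 2 + ε)) ^ (((n : ℝ) - 2 * k) / 2) *
              ∑ j ∈ Finset.range k,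
                Real.Gamma ((j : ℝ) + ((n : ℝ) - 2 * k) / 2) /
                    (Real.Gamma ((j : ℝ) + 1) * Real.Gamma (((n : ℝ) - 2 * k) / 2)) *
                  ((δ ^ 2 - ‖x‖ ^ 2) / (δ ^ 2 + ε)) ^ j|
            ^ ((2 * (n : ℝ)) / ((n : ℝ) - 2 * k)))
        ≥ ε ^ (-(n : ℝ) / 2) *
          (2 * Real.pi ^ (((n : ℝ) + 1) / 2) / Real.Gamma (((n : ℝ) + 1) / 2)
            - C * ε ^ (((n : ℝ) - 2 * k) / 2)) :=
  test_function_Lp_lower_bound_general n k hk hkn δ hδ0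
end

section
/- Let k, n be integers with 2 ≤ k and n > 4k, and let 0 < δ < 1 be fixed. For ε > 0 define F_ε : B_δ → ℝ on the ball B_δ = {x ∈ ℝ^n : |x| < δ} by F_ε(x) = (2/(ε+|x|²))^{(n-2k)/2} − (2/(δ²+ε))^{(n-2k)/2} · ∑_{j=0}^{k-1} [Γ(j+(n-2k)/2)/(Γ(j+1)Γ((n-2k)/2))] · ((δ²−|x|²)/(δ²+ε))^j. Then there exist constants 0 < c ≤ C and ε₀ > 0 such that for all 0 < ε < ε₀, c · ε^{2k-n/2} ≤ ∫_{B_δ} F_ε(x)² · (2/(1-|x|²))^{2k} dx ≤ C · ε^{2k-n/2}. -/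
open MeasureTheory Real Finset Metric Module Filter Topology

/-!
Write `F_ε = A_ε - S_ε` with the bubble `A_ε(x) = (2 / (ε + ‖x‖²)) ^ p`, `p = (n - 2k) / 2`.
On `B_δ` the correction `S_ε` is bounded uniformly in `ε`, and the weight `(2 / (1 - ‖x‖²)) ^ 2k`
lies between `1` and a constant. The dilation `x ↦ √ε x` gives
`∫_{ℝⁿ} A_ε² = ε ^ (n/2 - 2p) ∫_{ℝⁿ} A_1²`, finite because `4p > n`; since `n/2 - 2p < 0`,
this yields the upper bound. For the lower bound, `A_ε ≥ ε ^ (-p)` on the ball of radius `√ε`,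
which for small `ε` beats the bounded correction by a factor two, and this ball has volume
`ε ^ (n/2)` times that of the unit ball.
-/

noncomputable section

section Profiles

variable {E : Type*} [NormedAddCommGroup E]

def bubble (p ε : ℝ) (x : E) : ℝ := (2 / (ε + ‖x‖ ^ 2)) ^ p

/-- The coefficient of `u ^ j` in the binomial series of `(1 - u) ^ (-p)`. -/
def negBinomCoeff (p : ℝ) (j : ℕ) : ℝ := Gamma (j + p) / (Gamma (j + 1) * Gamma p)

/-- Writing `ε + ‖x‖² = (δ² + ε) (1 - u)` with `u = (δ² - ‖x‖²) / (δ² + ε)`, this is the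
expansion of `bubble p ε x` in powers of `u` truncated at order `k`. -/
def bubbleTaylor (k : ℕ) (p δ ε : ℝ) (x : E) : ℝ :=
  (2 / (δ ^ 2 + ε)) ^ p *
    ∑ j ∈ range k, negBinomCoeff p j * ((δ ^ 2 - ‖x‖ ^ 2) / (δ ^ 2 + ε)) ^ j

/-- The paper's `F_ε` for `p = (n - 2k) / 2`. -/
def testFunction (k : ℕ) (p δ ε : ℝ) (x : E) : ℝ := bubble p ε x - bubbleTaylor k p δ ε x

def poincareFactor (x : E) : ℝ := 2 / (1 - ‖x‖ ^ 2)

variable {k : ℕ} {p δ ε : ℝ} {x : E}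

lemma bubble_nonneg (hε : 0 ≤ ε) : 0 ≤ bubble p ε x := by
  unfold bubble; positivity

lemma rpow_neg_le_bubble (hp : 0 ≤ p) (hε : 0 < ε) (hx : ‖x‖ < √ε) : ε ^ (-p) ≤ bubble p ε x := by
  have hx2 : ‖x‖ ^ 2 < ε := by
    simpa [sq_sqrt hε.le] using pow_lt_pow_left₀ hx (norm_nonneg x) two_ne_zero
  rw [rpow_neg hε.le, ← inv_rpow hε.le]
  refine rpow_le_rpow (by positivity) ?_ hp
  rw [inv_eq_one_div, div_le_div_iff₀ hε (by positivity)]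
  linarith

-- The exponent is written in the form used by `integrable_rpow_neg_one_add_norm_sq`.
lemma bubble_sq (hε : 0 < ε) (p : ℝ) (x : E) :
    bubble p ε x ^ 2 = 2 ^ (2 * p) * (ε + ‖x‖ ^ 2) ^ (-(4 * p) / 2) := by
  have hpos : 0 < ε + ‖x‖ ^ 2 := by positivity
  rw [bubble, ← rpow_mul_natCast (by positivity), div_rpow zero_le_two hpos.le,
    show -(4 * p) / 2 = -(p * (2 : ℕ)) by push_cast; ring, rpow_neg hpos.le, div_eq_mul_inv]
  ring_nf

lemma negBinomCoeff_pos (hp : 0 < p) (j : ℕ) : 0 < negBinomCoeff p j :=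
  div_pos (Gamma_pos_of_pos (by positivity))
    (mul_pos (Gamma_pos_of_pos (by positivity)) (Gamma_pos_of_pos hp))

lemma bubbleTaylor_nonneg (hp : 0 < p) (hε : 0 ≤ ε) (hx : ‖x‖ ≤ δ) :
    0 ≤ bubbleTaylor k p δ ε x := by
  have hx2 : ‖x‖ ^ 2 ≤ δ ^ 2 := pow_le_pow_left₀ (norm_nonneg x) hx 2
  refine mul_nonneg (by positivity) (sum_nonneg fun j _ => ?_)
  exact mul_nonneg (negBinomCoeff_pos hp j).le
    (pow_nonneg (div_nonneg (by linarith) (by positivity)) j)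

lemma bubbleTaylor_le (hp : 0 < p) (hδ : 0 < δ) (hε : 0 ≤ ε) (hx : ‖x‖ ≤ δ) :
    bubbleTaylor k p δ ε x ≤ (2 / δ ^ 2) ^ p * ∑ j ∈ range k, negBinomCoeff p j := by
  have hx2 : ‖x‖ ^ 2 ≤ δ ^ 2 := pow_le_pow_left₀ (norm_nonneg x) hx 2
  have hden : 0 < δ ^ 2 + ε := by positivity
  have hu : (δ ^ 2 - ‖x‖ ^ 2) / (δ ^ 2 + ε) ∈ Set.Icc (0 : ℝ) 1 :=
    ⟨div_nonneg (by linarith) hden.le, (div_le_one hden).2 (by nlinarith [norm_nonneg x])⟩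
  refine mul_le_mul (rpow_le_rpow (by positivity) ?_ hp.le)
    (sum_le_sum fun j _ => mul_le_of_le_one_right (negBinomCoeff_pos hp j).le
      (pow_le_one₀ hu.1 hu.2))
    (sum_nonneg fun j _ => mul_nonneg (negBinomCoeff_pos hp j).le (pow_nonneg hu.1 j))
    (by positivity)
  exact div_le_div_of_nonneg_left zero_le_two (by positivity) (by linarith)

lemma one_le_poincareFactor (hx : ‖x‖ < 1) : 1 ≤ poincareFactor x := by
  have hx2 : ‖x‖ ^ 2 < 1 := pow_lt_one₀ (norm_nonneg x) hx two_ne_zero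
  rw [poincareFactor, le_div_iff₀ (by linarith)]
  nlinarith [norm_nonneg x]

lemma one_le_poincareFactor_pow (hx : ‖x‖ < 1) (m : ℕ) : 1 ≤ poincareFactor x ^ m :=
  one_le_pow₀ (one_le_poincareFactor hx)

lemma poincareFactor_pow_le (hδ : δ < 1) (hx : ‖x‖ ≤ δ) (m : ℕ) :
    poincareFactor x ^ m ≤ (2 / (1 - δ ^ 2)) ^ m := by
  have hx2 : ‖x‖ ^ 2 ≤ δ ^ 2 := pow_le_pow_left₀ (norm_nonneg x) hx 2
  have hδ2 : δ ^ 2 < 1 := pow_lt_one₀ ((norm_nonneg x).trans hx) hδ two_ne_zero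
  exact pow_le_pow_left₀ (zero_le_one.trans (one_le_poincareFactor (hx.trans_lt hδ)))
    (div_le_div_of_nonneg_left zero_le_two (by linarith) (by linarith)) m

lemma continuous_testFunction (hε : 0 < ε) : Continuous (testFunction k p δ ε : E → ℝ) := by
  have hden (x : E) : 0 < ε + ‖x‖ ^ 2 := by positivity
  have hbubble : Continuous (bubble p ε : E → ℝ) :=
    (continuous_const.div (by fun_prop) fun x => (hden x).ne').rpow_const
      fun x => Or.inl (div_pos two_pos (hden x)).ne'
  exact hbubble.sub (by unfold bubbleTaylor; fun_prop)

lemma continuousOn_poincareFactor (hδ : δ < 1) :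
    ContinuousOn (poincareFactor : E → ℝ) (closedBall 0 δ) := by
  refine continuousOn_const.div (by fun_prop) fun x hx => (sub_pos.2 ?_).ne'
  exact pow_lt_one₀ (norm_nonneg x) ((mem_closedBall_zero_iff.1 hx).trans_lt hδ) two_ne_zero

end Profiles

section Scaling

variable {E : Type*} [NormedAddCommGroup E] [NormedSpace ℝ E] {p ε : ℝ}

lemma bubble_one_inv_sqrt_smul (hε : 0 < ε) (p : ℝ) (x : E) :
    bubble p 1 ((√ε)⁻¹ • x) = ε ^ p * bubble p ε x := by
  have hnorm : ‖(√ε)⁻¹ • x‖ ^ 2 = ‖x‖ ^ 2 / ε := by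
    rw [norm_smul, mul_pow, norm_inv, norm_of_nonneg (sqrt_nonneg ε), inv_pow, sq_sqrt hε.le,
      inv_mul_eq_div]
  have hbase : 2 / (1 + ‖x‖ ^ 2 / ε) = ε * (2 / (ε + ‖x‖ ^ 2)) := by
    field_simp
  rw [bubble, bubble, hnorm, hbase, mul_rpow hε.le (by positivity)]

lemma sqrt_pow_eq_rpow (hε : 0 ≤ ε) (n : ℕ) : √ε ^ n = ε ^ ((n : ℝ) / 2) := by
  rw [sqrt_eq_rpow, ← rpow_mul_natCast hε]
  ring_nf

variable [FiniteDimensional ℝ E] [MeasurableSpace E] [BorelSpace E]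
  {μ : Measure E} [μ.IsAddHaarMeasure]

lemma integrable_bubble_one_sq (hdim : (finrank ℝ E : ℝ) < 4 * p) :
    Integrable (fun x : E => bubble p 1 x ^ 2) μ := by
  simp_rw [bubble_sq one_pos]
  exact (integrable_rpow_neg_one_add_norm_sq hdim).const_mul _

lemma integrable_bubble_sq (hdim : (finrank ℝ E : ℝ) < 4 * p) (hε : 0 < ε) :
    Integrable (fun x : E => bubble p ε x ^ 2) μ := by
  have hscaled := (integrable_bubble_one_sq (μ := μ) hdim).comp_smul
    (inv_ne_zero (sqrt_pos.2 hε).ne')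
  simp_rw [bubble_one_inv_sqrt_smul hε, mul_pow] at hscaled
  refine (hscaled.const_mul ((ε ^ p) ^ 2)⁻¹).congr (.of_forall fun x => ?_)
  beta_reduce
  rw [← mul_assoc, inv_mul_cancel₀ (by positivity), one_mul]

lemma integral_bubble_sq (hε : 0 < ε) (p : ℝ) :
    ∫ x, bubble p ε x ^ 2 ∂μ = ε ^ ((finrank ℝ E : ℝ) / 2 - 2 * p) * ∫ x, bubble p 1 x ^ 2 ∂μ := by
  have hscale := Measure.integral_comp_inv_smul_of_nonneg μ (fun x => bubble p 1 x ^ 2)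
    (sqrt_nonneg ε)
  simp_rw [bubble_one_inv_sqrt_smul hε, mul_pow, integral_const_mul, smul_eq_mul,
    sqrt_pow_eq_rpow hε.le, ← rpow_mul_natCast hε.le] at hscale
  rw [rpow_sub hε, div_mul_eq_mul_div, ← hscale, Nat.cast_ofNat, mul_comm p 2,
    mul_div_cancel_left₀ _ (by positivity)]

lemma measureReal_ball_sqrt (hε : 0 < ε) :
    μ.real (ball 0 √ε) = ε ^ ((finrank ℝ E : ℝ) / 2) * μ.real (ball (0 : E) 1) := by
  rw [measureReal_def, Measure.addHaar_ball_of_pos μ 0 (sqrt_pos.2 hε), ENNReal.toReal_mul,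
    ENNReal.toReal_ofReal (by positivity), sqrt_pow_eq_rpow hε.le, measureReal_def]

end Scaling

section TestFunction

variable {E : Type*} [NormedAddCommGroup E] [NormedSpace ℝ E] [FiniteDimensional ℝ E]
  [MeasurableSpace E] [BorelSpace E] {μ : Measure E} [μ.IsAddHaarMeasure] {p δ ε : ℝ}

lemma integrableOn_testFunction_sq_mul {k : ℕ} (hε : 0 < ε) (hδ : δ < 1) (m : ℕ) :
    IntegrableOn (fun x => testFunction k p δ ε x ^ 2 * poincareFactor x ^ m) (ball 0 δ) μ :=
  (((continuous_testFunction hε).pow 2).continuousOn.mul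
    ((continuousOn_poincareFactor hδ).pow m)).integrableOn_compact
    (isCompact_closedBall 0 δ) |>.mono_set ball_subset_closedBall

theorem exists_pos_eventually_le_setIntegral_testFunction_sq_mul (hp : 0 < p) (hδ : 0 < δ)
    (hδ1 : δ < 1) (k m : ℕ) :
    ∃ c > 0, ∀ᶠ ε in 𝓝[>] 0, c * ε ^ ((finrank ℝ E : ℝ) / 2 - 2 * p) ≤
      ∫ x in ball 0 δ, testFunction k p δ ε x ^ 2 * poincareFactor x ^ m ∂μ := by
  set B := (2 / δ ^ 2) ^ p * ∑ j ∈ range k, negBinomCoeff p j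
  have hV : 0 < μ.real (ball (0 : E) 1) :=
    ENNReal.toReal_pos (measure_ball_pos μ 0 one_pos).ne' measure_ball_lt_top.ne
  refine ⟨μ.real (ball (0 : E) 1) / 4, by positivity, ?_⟩
  have hlarge : ∀ᶠ ε in 𝓝[>] 0, 2 * B ≤ ε ^ (-p) :=
    (tendsto_rpow_neg_nhdsGT_zero (neg_neg_of_pos hp)).eventually_ge_atTop _
  filter_upwards [Ioo_mem_nhdsGT (pow_pos hδ 2), hlarge] with ε ⟨hε, hεδ⟩ hB
  have hsub : ball (0 : E) √ε ⊆ ball 0 δ :=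
    ball_subset_ball ((sqrt_le_left hδ.le).2 hεδ.le)
  have hpt : ∀ x ∈ ball (0 : E) √ε,
      (ε ^ (-p) / 2) ^ 2 ≤ testFunction k p δ ε x ^ 2 * poincareFactor x ^ m := by
    intro x hx
    have hxε := mem_ball_zero_iff.1 hx
    have hxδ := mem_ball_zero_iff.1 (hsub hx)
    have hF : ε ^ (-p) / 2 ≤ testFunction k p δ ε x := by
      unfold testFunction
      linarith [rpow_neg_le_bubble hp.le hε hxε, bubbleTaylor_le (k := k) hp hδ hε.le hxδ.le]
    have hw := one_le_poincareFactor_pow (hxδ.trans hδ1) m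
    nlinarith [pow_le_pow_left₀ (by positivity) hF 2, sq_nonneg (ε ^ (-p) / 2)]
  calc μ.real (ball (0 : E) 1) / 4 * ε ^ ((finrank ℝ E : ℝ) / 2 - 2 * p)
      = (ε ^ (-p) / 2) ^ 2 * μ.real (ball (0 : E) √ε) := by
        rw [measureReal_ball_sqrt hε, rpow_sub hε, mul_comm 2 p, rpow_mul hε.le, rpow_two,
          rpow_neg hε.le]
        field_simp
        norm_num
    _ ≤ ∫ x in ball 0 √ε, testFunction k p δ ε x ^ 2 * poincareFactor x ^ m ∂μ :=
        setIntegral_ge_of_const_le_real measurableSet_ball measure_ball_lt_top.ne hpt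
          ((integrableOn_testFunction_sq_mul hε hδ1 m).mono_set hsub)
    _ ≤ ∫ x in ball 0 δ, testFunction k p δ ε x ^ 2 * poincareFactor x ^ m ∂μ :=
        setIntegral_mono_set (integrableOn_testFunction_sq_mul hε hδ1 m)
          (ae_restrict_of_forall_mem measurableSet_ball fun x hx => mul_nonneg (sq_nonneg _)
            (zero_le_one.trans (one_le_poincareFactor_pow ((mem_ball_zero_iff.1 hx).trans hδ1) m)))
          hsub.eventuallyLE

theorem exists_eventually_setIntegral_testFunction_sq_mul_le (hdim : (finrank ℝ E : ℝ) < 4 * p)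
    (hδ : 0 < δ) (hδ1 : δ < 1) (k m : ℕ) :
    ∃ C, ∀ᶠ ε in 𝓝[>] 0,
      ∫ x in ball 0 δ, testFunction k p δ ε x ^ 2 * poincareFactor x ^ m ∂μ ≤
        C * ε ^ ((finrank ℝ E : ℝ) / 2 - 2 * p) := by
  have hp : 0 < p := by linarith [(finrank ℝ E).cast_nonneg (α := ℝ)]
  set B := (2 / δ ^ 2) ^ p * ∑ j ∈ range k, negBinomCoeff p j
  set W := (2 / (1 - δ ^ 2)) ^ m
  set I := ∫ x, bubble p 1 x ^ 2 ∂μ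
  refine ⟨W * (I + B ^ 2 * μ.real (ball (0 : E) δ)), ?_⟩
  filter_upwards [Ioo_mem_nhdsGT one_pos] with ε ⟨hε, hε1⟩
  have hpt : ∀ x ∈ ball (0 : E) δ,
      testFunction k p δ ε x ^ 2 * poincareFactor x ^ m ≤ W * (bubble p ε x ^ 2 + B ^ 2) := by
    intro x hx
    have hxδ := (mem_ball_zero_iff.1 hx).le
    have hF : testFunction k p δ ε x ^ 2 ≤ bubble p ε x ^ 2 + B ^ 2 := by
      unfold testFunction
      nlinarith [bubble_nonneg (p := p) (x := x) hε.le, bubbleTaylor_nonneg (k := k) hp hε.le hxδ,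
        bubbleTaylor_le (k := k) hp hδ hε.le hxδ]
    rw [mul_comm W]
    exact mul_le_mul hF (poincareFactor_pow_le hδ1 hxδ m)
      (zero_le_one.trans (one_le_poincareFactor_pow (hxδ.trans_lt hδ1) m)) (by positivity)
  have hbubble := integrable_bubble_sq (μ := μ) hdim hε
  have hbound : IntegrableOn (fun x => W * (bubble p ε x ^ 2 + B ^ 2)) (ball 0 δ) μ :=
    (hbubble.integrableOn.add (integrableOn_const measure_ball_lt_top.ne)).const_mul W
  have hW : 0 ≤ W := pow_nonneg (div_nonneg zero_le_two (by nlinarith)) m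
  have hD : 0 ≤ B ^ 2 * μ.real (ball (0 : E) δ) := by positivity
  have hone : 1 ≤ ε ^ ((finrank ℝ E : ℝ) / 2 - 2 * p) :=
    one_le_rpow_of_pos_of_le_one_of_nonpos hε hε1.le (by linarith)
  have hI : 0 ≤ I := integral_nonneg fun x => sq_nonneg _
  calc ∫ x in ball 0 δ, testFunction k p δ ε x ^ 2 * poincareFactor x ^ m ∂μ
      ≤ ∫ x in ball 0 δ, W * (bubble p ε x ^ 2 + B ^ 2) ∂μ :=
        setIntegral_mono_on (integrableOn_testFunction_sq_mul hε hδ1 m) hbound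
          measurableSet_ball hpt
    _ = W * (∫ x in ball 0 δ, bubble p ε x ^ 2 ∂μ + B ^ 2 * μ.real (ball (0 : E) δ)) := by
        rw [integral_const_mul, integral_add hbubble.integrableOn
          (integrableOn_const measure_ball_lt_top.ne), setIntegral_const, smul_eq_mul,
          mul_comm (B ^ 2)]
    _ ≤ W * (ε ^ ((finrank ℝ E : ℝ) / 2 - 2 * p) * I + B ^ 2 * μ.real (ball (0 : E) δ)) := by
        gcongr
        rw [← integral_bubble_sq hε]
        exact setIntegral_le_integral hbubble (.of_forall fun x => sq_nonneg _)
    _ ≤ W * (I + B ^ 2 * μ.real (ball (0 : E) δ)) * ε ^ ((finrank ℝ E : ℝ) / 2 - 2 * p) := by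
        nlinarith [mul_nonneg hW (mul_nonneg hD (sub_nonneg.2 hone))]

end TestFunction

theorem test_function_L2_asymptotics_general (n k : ℕ) (hn : 4 * k < n)
    (δ : ℝ) (hδ0 : 0 < δ) (hδ1 : δ < 1) :
    ∃ c C ε₀ : ℝ, 0 < c ∧ c ≤ C ∧ 0 < ε₀ ∧ ∀ ε : ℝ, 0 < ε → ε < ε₀ →
      c * ε ^ (2 * (k : ℝ) - (n : ℝ) / 2)
        ≤ (∫ x in Metric.ball (0 : EuclideanSpace ℝ (Fin n)) δ,
            ((2 / (ε + ‖x‖ ^ 2)) ^ (((n : ℝ) - 2 * k) / 2) -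
              (2 / (δ ^ 2 + ε)) ^ (((n : ℝ) - 2 * k) / 2) *
                ∑ j ∈ Finset.range k,
                  Real.Gamma ((j : ℝ) + ((n : ℝ) - 2 * k) / 2) /
                      (Real.Gamma ((j : ℝ) + 1) * Real.Gamma (((n : ℝ) - 2 * k) / 2)) *
                    ((δ ^ 2 - ‖x‖ ^ 2) / (δ ^ 2 + ε)) ^ j) ^ 2 *
            (2 / (1 - ‖x‖ ^ 2)) ^ (2 * k))
      ∧ (∫ x in Metric.ball (0 : EuclideanSpace ℝ (Fin n)) δ,
            ((2 / (ε + ‖x‖ ^ 2)) ^ (((n : ℝ) - 2 * k) / 2) -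
              (2 / (δ ^ 2 + ε)) ^ (((n : ℝ) - 2 * k) / 2) *
                ∑ j ∈ Finset.range k,
                  Real.Gamma ((j : ℝ) + ((n : ℝ) - 2 * k) / 2) /
                      (Real.Gamma ((j : ℝ) + 1) * Real.Gamma (((n : ℝ) - 2 * k) / 2)) *
                    ((δ ^ 2 - ‖x‖ ^ 2) / (δ ^ 2 + ε)) ^ j) ^ 2 *
            (2 / (1 - ‖x‖ ^ 2)) ^ (2 * k))
          ≤ C * ε ^ (2 * (k : ℝ) - (n : ℝ) / 2) := by
  have hdim : (finrank ℝ (EuclideanSpace ℝ (Fin n)) : ℝ) < 4 * (((n : ℝ) - 2 * k) / 2) := by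
    rw [finrank_euclideanSpace_fin]
    have : (4 * k : ℝ) < n := by exact_mod_cast hn
    linarith
  have hp : 0 < ((n : ℝ) - 2 * k) / 2 := by
    linarith [(finrank ℝ (EuclideanSpace ℝ (Fin n))).cast_nonneg (α := ℝ)]
  have hexp : 2 * (k : ℝ) - n / 2
      = (finrank ℝ (EuclideanSpace ℝ (Fin n)) : ℝ) / 2 - 2 * (((n : ℝ) - 2 * k) / 2) := by
    rw [finrank_euclideanSpace_fin]
    ring
  obtain ⟨c, hc, hlower⟩ := exists_pos_eventually_le_setIntegral_testFunction_sq_mul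
    (μ := (volume : Measure (EuclideanSpace ℝ (Fin n)))) hp hδ0 hδ1 k (2 * k)
  obtain ⟨C, hupper⟩ :=
    exists_eventually_setIntegral_testFunction_sq_mul_le (μ := volume) hdim hδ0 hδ1 k (2 * k)
  obtain ⟨ε₀, hε₀, hbounds⟩ := (nhdsGT_basis 0).eventually_iff.1 (hlower.and hupper)
  refine ⟨c, max c C, ε₀, hc, le_max_left c C, hε₀, fun ε hε hεε₀ => ?_⟩
  obtain ⟨hlow, hup⟩ := hbounds ⟨hε, hεε₀⟩
  rw [hexp]
  exact ⟨hlow, hup.trans (by gcongr; exact le_max_right c C)⟩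

/-- The third estimate of Lemma 5.1 of the paper: for `n > 4k` the weighted `L²`-norm
of the truncated Sobolev test function `F_ε` is comparable to `ε^{2k - n/2}`. -/
theorem test_function_L2_asymptotics (n k : ℕ) (hk : 2 ≤ k) (hn : 4 * k < n)
    (δ : ℝ) (hδ0 : 0 < δ) (hδ1 : δ < 1) :
    ∃ c C ε₀ : ℝ, 0 < c ∧ c ≤ C ∧ 0 < ε₀ ∧ ∀ ε : ℝ, 0 < ε → ε < ε₀ →
      c * ε ^ (2 * (k : ℝ) - (n : ℝ) / 2)
        ≤ (∫ x in Metric.ball (0 : EuclideanSpace ℝ (Fin n)) δ,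
            ((2 / (ε + ‖x‖ ^ 2)) ^ (((n : ℝ) - 2 * k) / 2) -
              (2 / (δ ^ 2 + ε)) ^ (((n : ℝ) - 2 * k) / 2) *
                ∑ j ∈ Finset.range k,
                  Real.Gamma ((j : ℝ) + ((n : ℝ) - 2 * k) / 2) /
                      (Real.Gamma ((j : ℝ) + 1) * Real.Gamma (((n : ℝ) - 2 * k) / 2)) *
                    ((δ ^ 2 - ‖x‖ ^ 2) / (δ ^ 2 + ε)) ^ j) ^ 2 *
            (2 / (1 - ‖x‖ ^ 2)) ^ (2 * k))
      ∧ (∫ x in Metric.ball (0 : EuclideanSpace ℝ (Fin n)) δ,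
            ((2 / (ε + ‖x‖ ^ 2)) ^ (((n : ℝ) - 2 * k) / 2) -
              (2 / (δ ^ 2 + ε)) ^ (((n : ℝ) - 2 * k) / 2) *
                ∑ j ∈ Finset.range k,
                  Real.Gamma ((j : ℝ) + ((n : ℝ) - 2 * k) / 2) /
                      (Real.Gamma ((j : ℝ) + 1) * Real.Gamma (((n : ℝ) - 2 * k) / 2)) *
                    ((δ ^ 2 - ‖x‖ ^ 2) / (δ ^ 2 + ε)) ^ j) ^ 2 *
            (2 / (1 - ‖x‖ ^ 2)) ^ (2 * k))
          ≤ C * ε ^ (2 * (k : ℝ) - (n : ℝ) / 2) :=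
  test_function_L2_asymptotics_general n k hn δ hδ0 hδ1
end
end

section
/- Let m, k, l, j be integers with l ≥ 1, k ≥ 0, and 0 ≤ j ≤ m − k − l − 2. Then Γ(m+k)Γ(m-k-l)/(Γ(m-k-l-j)Γ(m+k-j)) − Γ(m+k+1)Γ(m-1-k-l)/(Γ(m-1-k-l-j)Γ(m+k+1-j)) = (2k+1+l) · j · Γ(m+k)Γ(m-1-k-l)/(Γ(m-k-l-j)Γ(m+k+1-j)). -/
/-!
Write `A = m + k` and `B = m - 1 - k - l`, so that `A - B = 2k + 1 + l`. Pulling one factor out of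
each Gamma value via `Γ(x + 1) = x Γ(x)` reduces both terms on the left and the right-hand side to
multiples of `Γ(A) Γ(B) / (Γ(A + 1 - j) Γ(B + 1 - j))`, with coefficients `B (A - j)`, `A (B - j)`
and `(A - B) j`; and indeed `B (A - j) - A (B - j) = (A - B) j`.
-/

theorem Real.Gamma_ratio_sub_Gamma_ratio (A B j : ℝ) (hA : A ≠ 0) (hB : B ≠ 0)
    (hAj : ∀ n : ℕ, A - j ≠ -n) (hBj : ∀ n : ℕ, B - j ≠ -n) :
    Gamma A * Gamma (B + 1) / (Gamma (B + 1 - j) * Gamma (A - j))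
      - Gamma (A + 1) * Gamma B / (Gamma (B - j) * Gamma (A + 1 - j))
    = (A - B) * j * Gamma A * Gamma B / (Gamma (B + 1 - j) * Gamma (A + 1 - j)) := by
  have hAj0 : A - j ≠ 0 := by simpa using hAj 0
  have hBj0 : B - j ≠ 0 := by simpa using hBj 0
  rw [← sub_add_eq_add_sub B, ← sub_add_eq_add_sub A, Gamma_add_one hA, Gamma_add_one hB,
    Gamma_add_one hAj0, Gamma_add_one hBj0]
  have hΓA := Gamma_ne_zero hAj
  have hΓB := Gamma_ne_zero hBj
  field_simp
  ring

theorem gamma_identity_even_general (m k l j : ℕ) (hj : j + k + l + 2 ≤ m) :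
    Real.Gamma ((m : ℝ) + k) * Real.Gamma ((m : ℝ) - k - l) /
        (Real.Gamma ((m : ℝ) - k - l - j) * Real.Gamma ((m : ℝ) + k - j))
      - Real.Gamma ((m : ℝ) + k + 1) * Real.Gamma ((m : ℝ) - 1 - k - l) /
        (Real.Gamma ((m : ℝ) - 1 - k - l - j) * Real.Gamma ((m : ℝ) + k + 1 - j))
    = (2 * (k : ℝ) + 1 + l) * j * Real.Gamma ((m : ℝ) + k) *
        Real.Gamma ((m : ℝ) - 1 - k - l) /
        (Real.Gamma ((m : ℝ) - k - l - j) * Real.Gamma ((m : ℝ) + k + 1 - j)) := by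
  have hm : (j : ℝ) + k + l + 2 ≤ m := by exact_mod_cast hj
  have hAj : (0 : ℝ) < m + k - j := by linarith
  have hBj : (0 : ℝ) < m - 1 - k - l - j := by linarith
  have key := Real.Gamma_ratio_sub_Gamma_ratio (m + k) (m - 1 - k - l) j (ne_of_gt (by linarith))
    (ne_of_gt (by linarith)) (fun n ↦ by linarith [n.cast_nonneg (α := ℝ)])
    (fun n ↦ by linarith [n.cast_nonneg (α := ℝ)])
  convert key using 3 <;> ring_nf

/-- Identity (6.6) of the paper: a Gamma-function identity used in the induction for
the Green's function of products of shifted resolvents in even dimensions. -/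
theorem gamma_identity_even (m k l j : ℕ) (hl : 1 ≤ l) (hj : j + k + l + 2 ≤ m) :
    Real.Gamma ((m : ℝ) + k) * Real.Gamma ((m : ℝ) - k - l) /
        (Real.Gamma ((m : ℝ) - k - l - j) * Real.Gamma ((m : ℝ) + k - j))
      - Real.Gamma ((m : ℝ) + k + 1) * Real.Gamma ((m : ℝ) - 1 - k - l) /
        (Real.Gamma ((m : ℝ) - 1 - k - l - j) * Real.Gamma ((m : ℝ) + k + 1 - j))
    = (2 * (k : ℝ) + 1 + l) * j * Real.Gamma ((m : ℝ) + k) *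
        Real.Gamma ((m : ℝ) - 1 - k - l) /
        (Real.Gamma ((m : ℝ) - k - l - j) * Real.Gamma ((m : ℝ) + k + 1 - j)) :=
  gamma_identity_even_general m k l j hj
end

section
/- Let m, k be integers with k ≥ 0 and m ≥ k + 2, and let ρ > 0 be real. Then ∫_0^π (cosh ρ + cos t)^{m-2-k} (sin t)^{2k+1} dt = ∑_{j=0}^{m-2-k} [Γ(m-1-k)/(Γ(j+1)Γ(m-1-k-j))] · (2 sinh²(ρ/2))^j · 2^{m+k-1-j} · Γ(m-1-j) · Γ(k+1) / Γ(m+k-j). -/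
open Real Finset intervalIntegral

/-!
Writing `cosh ρ = 1 + 2 sinh²(ρ/2)` and substituting `u = cos t`, the integral becomes
`∫₋₁¹ (2 sinh²(ρ/2) + (1 + u))^(m-2-k) (1 + u)^k (1 - u)^k du`. Expanding by the binomial theorem
leaves integrals `∫₋₁¹ (1 + u)^a (1 - u)^b du`, which `u = 2x - 1` turns into `2^(a+b+1)` times the
Beta integral `B(a+1, b+1) = Γ(a+1) Γ(b+1) / Γ(a+b+2)`.
-/

theorem integral_rpow_mul_one_sub_rpow {u v : ℝ} (hu : 0 < u) (hv : 0 < v) :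
    ∫ x in (0 : ℝ)..1, x ^ (u - 1) * (1 - x) ^ (v - 1) = Gamma u * Gamma v / Gamma (u + v) := by
  apply Complex.ofReal_injective
  have hB := Complex.betaIntegral_eq_Gamma_mul_div u v (by simpa) (by simpa)
  rw [Complex.betaIntegral] at hB
  push_cast [← Complex.Gamma_ofReal, ← hB, ← integral_ofReal]
  refine integral_congr fun x hx => ?_
  rw [Set.uIcc_of_le zero_le_one] at hx
  push_cast [Complex.ofReal_cpow hx.1, Complex.ofReal_cpow (sub_nonneg.2 hx.2)]
  rfl

theorem integral_one_add_pow_mul_one_sub_pow (a b : ℕ) :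
    ∫ u in (-1 : ℝ)..1, (1 + u) ^ a * (1 - u) ^ b
      = 2 ^ (a + b + 1) * (Gamma (a + 1) * Gamma (b + 1) / Gamma (a + b + 2)) := by
  have hsub : ∀ x : ℝ, (1 + (2 * x - 1)) ^ a * (1 - (2 * x - 1)) ^ b
      = 2 ^ (a + b) * (x ^ ((a + 1 : ℝ) - 1) * (1 - x) ^ ((b + 1 : ℝ) - 1)) := by
    intro x
    rw [add_sub_cancel_right, add_sub_cancel_right, rpow_natCast, rpow_natCast,
      show 1 + (2 * x - 1) = 2 * x by ring, show 1 - (2 * x - 1) = 2 * (1 - x) by ring,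
      mul_pow, mul_pow, pow_add]
    ring
  have h := integral_comp_mul_sub (fun u : ℝ => (1 + u) ^ a * (1 - u) ^ b) two_ne_zero 1
    (a := 0) (b := 1)
  rw [integral_congr fun x _ => hsub x, integral_const_mul,
    integral_rpow_mul_one_sub_rpow (by positivity) (by positivity)] at h
  rw [show (a : ℝ) + 1 + (b + 1) = a + b + 2 by ring] at h
  norm_num at h
  linear_combination (-2) * h

theorem integral_comp_cos_mul_sin_pow_odd {g : ℝ → ℝ} (hg : Continuous g) (k : ℕ) :
    ∫ t in (0 : ℝ)..π, g (cos t) * sin t ^ (2 * k + 1)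
      = ∫ u in (-1 : ℝ)..1, g u * (1 - u ^ 2) ^ k := by
  have h := integral_comp_mul_deriv (a := 0) (b := π) (g := fun u => g u * (1 - u ^ 2) ^ k)
    (fun x _ => hasDerivAt_cos x) (by fun_prop) (by fun_prop)
  simp only [Function.comp_apply, cos_zero, cos_pi] at h
  rw [← neg_neg (∫ u in (-1 : ℝ)..1, _), ← integral_symm, ← h, ← integral_neg]
  refine integral_congr fun t _ => ?_
  rw [← sin_sq, ← pow_mul]
  ring

theorem cosh_eq_one_add_two_mul_sinh_half_sq (x : ℝ) : cosh x = 1 + 2 * sinh (x / 2) ^ 2 := by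
  have h := cosh_two_mul (x / 2)
  rw [mul_div_cancel₀ _ two_ne_zero, cosh_sq'] at h
  linarith

theorem one_add_add_pow_mul_one_sub_sq_pow {R : Type*} [CommRing R] (a u : R) (p k : ℕ) :
    (1 + a + u) ^ p * (1 - u ^ 2) ^ k
      = ∑ j ∈ range (p + 1), p.choose j * a ^ j * ((1 + u) ^ (p - j + k) * (1 - u) ^ k) := by
  rw [add_right_comm, add_comm, add_pow, sum_mul, show 1 - u ^ 2 = (1 + u) * (1 - u) by ring,
    mul_pow]
  refine sum_congr rfl fun j _ => ?_
  rw [pow_add]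
  ring

theorem integral_one_add_add_pow_mul_one_sub_sq_pow (a : ℝ) (p k : ℕ) :
    ∫ u in (-1 : ℝ)..1, (1 + a + u) ^ p * (1 - u ^ 2) ^ k
      = ∑ j ∈ range (p + 1), p.choose j * a ^ j * (2 ^ (p - j + k + k + 1) *
          (Gamma ((p - j + k : ℕ) + 1) * Gamma (k + 1) / Gamma ((p - j + k : ℕ) + k + 2))) := by
  simp_rw [one_add_add_pow_mul_one_sub_sq_pow]
  rw [integral_finsetSum fun j _ => (Continuous.intervalIntegrable (by fun_prop) _ _)]
  simp_rw [integral_const_mul, integral_one_add_pow_mul_one_sub_pow]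

theorem Nat.cast_choose_eq_Gamma_div {n j : ℕ} (h : j ≤ n) :
    (n.choose j : ℝ) = Gamma (n + 1) / (Gamma (j + 1) * Gamma ((n - j : ℕ) + 1)) := by
  rw [Nat.cast_choose ℝ h, Gamma_nat_eq_factorial, Gamma_nat_eq_factorial, Gamma_nat_eq_factorial]

theorem cosh_cos_integral_expansion_even_general (m k : ℕ) (hk : k + 2 ≤ m) (ρ : ℝ) :
    ∫ t in (0 : ℝ)..Real.pi,
        (Real.cosh ρ + Real.cos t) ^ (m - 2 - k) * Real.sin t ^ (2 * k + 1)
      = ∑ j ∈ Finset.range (m - 1 - k),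
          Real.Gamma ((m : ℝ) - 1 - k) /
              (Real.Gamma ((j : ℝ) + 1) * Real.Gamma ((m : ℝ) - 1 - k - j)) *
            (2 * Real.sinh (ρ / 2) ^ 2) ^ j *
            (2 : ℝ) ^ ((m : ℝ) + k - 1 - j) *
            Real.Gamma ((m : ℝ) - 1 - j) * Real.Gamma ((k : ℝ) + 1) /
            Real.Gamma ((m : ℝ) + k - j) := by
  obtain ⟨p, rfl⟩ : ∃ p, m = p + k + 2 := ⟨m - 2 - k, by omega⟩
  rw [show p + k + 2 - 2 - k = p by omega, show p + k + 2 - 1 - k = p + 1 by omega,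
    cosh_eq_one_add_two_mul_sinh_half_sq,
    integral_comp_cos_mul_sin_pow_odd (g := fun u => (1 + _ + u) ^ p) (by fun_prop),
    integral_one_add_add_pow_mul_one_sub_sq_pow]
  refine sum_congr rfl fun j hj => ?_
  have hjp : j ≤ p := Nat.lt_succ_iff.1 (mem_range.1 hj)
  rw [Nat.cast_choose_eq_Gamma_div hjp, ← rpow_natCast 2]
  push_cast [Nat.cast_sub hjp]
  ring_nf

/-- The computational core of Lemma 6.1 of the paper: for integers `m ≥ k+2`, `k ≥ 0`
and `ρ > 0`, `∫₀^π (cosh ρ + cos t)^{m-2-k} (sin t)^{2k+1} dt` expands as a finite sum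
of Gamma factors times powers of `sinh²(ρ/2)`. -/
theorem cosh_cos_integral_expansion_even (m k : ℕ) (hk : k + 2 ≤ m) (ρ : ℝ) (hρ : 0 < ρ) :
    ∫ t in (0 : ℝ)..Real.pi,
        (Real.cosh ρ + Real.cos t) ^ (m - 2 - k) * Real.sin t ^ (2 * k + 1)
      = ∑ j ∈ Finset.range (m - 1 - k),
          Real.Gamma ((m : ℝ) - 1 - k) /
              (Real.Gamma ((j : ℝ) + 1) * Real.Gamma ((m : ℝ) - 1 - k - j)) *
            (2 * Real.sinh (ρ / 2) ^ 2) ^ j *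
            (2 : ℝ) ^ ((m : ℝ) + k - 1 - j) *
            Real.Gamma ((m : ℝ) - 1 - j) * Real.Gamma ((k : ℝ) + 1) /
            Real.Gamma ((m : ℝ) + k - j) :=
  cosh_cos_integral_expansion_even_general m k hk ρ
end

section
/- Let ρ > 0 and let N be a real number with N > 1/2. Then ∫_ρ^∞ sinh r · (cosh r − cosh ρ)^{-1/2} · (sinh(r/2))^{-2N} dr = √2 · √π · (Γ(N − 1/2)/Γ(N)) · (sinh(ρ/2))^{1-2N}. -/
open Real MeasureTheory Set

/-!
The substitution `t = √((cosh r - cosh ρ) / 2)` satisfies `sinh (r / 2) ^ 2 = t ^ 2 + a ^ 2`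
with `a = sinh (ρ / 2)` and `sinh r * (cosh r - cosh ρ) ^ (-1/2) dr = 2 √2 dt`, so the integral
equals `2 √2 ∫₀^∞ (t ^ 2 + a ^ 2) ^ (-N) dt`. Scaling `t = a u` extracts `a ^ (1 - 2N)`, and
`x = 1 / (1 + u ^ 2)` turns `∫₀^∞ (1 + u ^ 2) ^ (-N) du` into half the beta integral
`B(N - 1/2, 1/2) = √π Γ(N - 1/2) / Γ(N)`.
-/

lemma Real.sq_rpow_neg {x : ℝ} (hx : 0 ≤ x) (y : ℝ) : (x ^ 2) ^ (-y) = x ^ (-(2 * y)) := by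
  rw [← rpow_natCast_mul hx]
  norm_num

theorem integral_Ioo_rpow_mul_one_sub_rpow_s19 {s t : ℝ} (hs : 0 < s) (ht : 0 < t) :
    ∫ x in Ioo (0 : ℝ) 1, x ^ (s - 1) * (1 - x) ^ (t - 1)
      = Gamma s * Gamma t / Gamma (s + t) := by
  have h := Complex.betaIntegral_eq_Gamma_mul_div s t (by simpa) (by simpa)
  rw [Complex.betaIntegral, intervalIntegral.integral_of_le zero_le_one,
    integral_Ioc_eq_integral_Ioo, ← Complex.ofReal_add, Complex.Gamma_ofReal,
    Complex.Gamma_ofReal, Complex.Gamma_ofReal] at h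
  refine Complex.ofReal_injective ?_
  rw [← integral_complex_ofReal]
  push_cast
  rw [← h]
  refine setIntegral_congr_fun measurableSet_Ioo fun x hx => ?_
  rw [Complex.ofReal_cpow hx.1.le, Complex.ofReal_cpow (sub_nonneg.2 hx.2.le)]
  push_cast
  rfl

theorem integral_Ioi_one_add_sq_rpow_neg_eq_half_mul_beta (N : ℝ) :
    ∫ u in Ioi (0 : ℝ), (1 + u ^ 2) ^ (-N)
      = 2⁻¹ * ∫ x in Ioo (0 : ℝ) 1, x ^ (N - 1 / 2 - 1) * (1 - x) ^ ((1 : ℝ) / 2 - 1) := by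
  have hpos : ∀ x ∈ Ioo (0 : ℝ) 1, 0 < x⁻¹ - 1 := fun x hx =>
    sub_pos.2 ((one_lt_inv₀ hx.1).2 hx.2)
  have hderiv : ∀ x ∈ Ioo (0 : ℝ) 1, HasDerivWithinAt (fun x => √(x⁻¹ - 1))
      (-(x ^ 2)⁻¹ / (2 * √(x⁻¹ - 1))) (Ioo 0 1) x := fun x hx =>
    (((hasDerivAt_inv hx.1.ne').sub_const 1).sqrt (hpos x hx).ne').hasDerivWithinAt
  have hanti : AntitoneOn (fun x : ℝ => √(x⁻¹ - 1)) (Ioo 0 1) := fun x hx y _ hxy =>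
    sqrt_le_sqrt (by gcongr; exact hx.1)
  have himage : (fun x : ℝ => √(x⁻¹ - 1)) '' Ioo 0 1 = Ioi 0 := by
    ext u
    constructor
    · rintro ⟨x, hx, rfl⟩
      exact sqrt_pos.2 (hpos x hx)
    · intro hu
      refine ⟨(1 + u ^ 2)⁻¹, ⟨by positivity, inv_lt_one_of_one_lt₀ ?_⟩, ?_⟩
      · nlinarith [mem_Ioi.1 hu]
      · simp only [inv_inv, add_sub_cancel_left, sqrt_sq (le_of_lt hu)]
  rw [← himage,
    integral_image_eq_integral_deriv_smul_of_antitoneOn measurableSet_Ioo hderiv hanti,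
    ← integral_const_mul]
  refine setIntegral_congr_fun measurableSet_Ioo fun x hx => ?_
  have hx0 : 0 < x := hx.1
  have hx1 : 0 < 1 - x := sub_pos.2 hx.2
  have hsplit : √(x⁻¹ - 1) = √(1 - x) / √x := by
    rw [← sqrt_div hx1.le]
    field_simp
  rw [smul_eq_mul, sq_sqrt (hpos x hx).le, add_sub_cancel, inv_rpow hx0.le, ← rpow_neg hx0.le,
    neg_neg, rpow_sub hx0, rpow_sub hx0, rpow_one, ← sqrt_eq_rpow,
    show (1 : ℝ) / 2 - 1 = -(1 / 2) by norm_num, rpow_neg hx1.le, ← sqrt_eq_rpow, hsplit]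
  have : 0 < √x := sqrt_pos.2 hx0
  have : 0 < √(1 - x) := sqrt_pos.2 hx1
  field_simp
  exact sq_sqrt hx0.le

theorem integral_Ioi_one_add_sq_rpow_neg {N : ℝ} (hN : 1 / 2 < N) :
    ∫ u in Ioi (0 : ℝ), (1 + u ^ 2) ^ (-N) = √π * Gamma (N - 1 / 2) / Gamma N / 2 := by
  rw [integral_Ioi_one_add_sq_rpow_neg_eq_half_mul_beta,
    integral_Ioo_rpow_mul_one_sub_rpow_s19 (by linarith) one_half_pos, sub_add_cancel,
    Gamma_one_half_eq]
  ring

theorem integral_Ioi_sq_add_sq_rpow_neg (N : ℝ) {a : ℝ} (ha : 0 < a) :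
    ∫ t in Ioi (0 : ℝ), (t ^ 2 + a ^ 2) ^ (-N)
      = a ^ (1 - 2 * N) * ∫ u in Ioi (0 : ℝ), (1 + u ^ 2) ^ (-N) := by
  have hscale (t : ℝ) :
      (t ^ 2 + a ^ 2) ^ (-N) = a ^ (-(2 * N)) * (1 + (a⁻¹ * t) ^ 2) ^ (-N) := by
    rw [← sq_rpow_neg ha.le, ← mul_rpow (by positivity) (by positivity)]
    congr 1
    field_simp
    ring
  simp_rw [hscale]
  rw [integral_const_mul,
    integral_comp_mul_left_Ioi (fun u => (1 + u ^ 2) ^ (-N)) 0 (inv_pos.2 ha), mul_zero, inv_inv,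
    smul_eq_mul, ← mul_assoc, sub_eq_add_neg, rpow_add ha, rpow_one, mul_comm a]

lemma Real.cosh_sub_cosh_div_two (r ρ : ℝ) :
    (cosh r - cosh ρ) / 2 = sinh (r / 2) ^ 2 - sinh (ρ / 2) ^ 2 := by
  have hcosh (x : ℝ) : cosh x = 1 + 2 * sinh (x / 2) ^ 2 := by
    calc cosh x = cosh (2 * (x / 2)) := by ring_nf
      _ = 1 + 2 * sinh (x / 2) ^ 2 := by rw [cosh_two_mul, cosh_sq']; ring
  rw [hcosh r, hcosh ρ]
  ring

section HyperbolicSubstitution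

variable {ρ : ℝ}

lemma Real.cosh_lt_cosh_of_nonneg_of_lt (hρ : 0 ≤ ρ) {r : ℝ} (hr : ρ < r) :
    cosh ρ < cosh r :=
  cosh_strictMonoOn hρ (hρ.trans hr.le) hr

lemma image_sqrt_cosh_sub_cosh_Ioi (hρ : 0 ≤ ρ) :
    (fun r => √((cosh r - cosh ρ) / 2)) '' Ioi ρ = Ioi 0 := by
  ext y
  constructor
  · rintro ⟨r, hr, rfl⟩
    exact sqrt_pos.2 (half_pos (sub_pos.2 (cosh_lt_cosh_of_nonneg_of_lt hρ hr)))
  · intro (hy : 0 < y)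
    refine ⟨2 * arsinh √(y ^ 2 + sinh (ρ / 2) ^ 2), ?_, ?_⟩
    · have : sinh (ρ / 2) < √(y ^ 2 + sinh (ρ / 2) ^ 2) :=
        lt_sqrt_of_sq_lt (lt_add_of_pos_left _ (pow_pos hy 2))
      calc ρ = 2 * arsinh (sinh (ρ / 2)) := by rw [arsinh_sinh]; ring
        _ < 2 * arsinh √(y ^ 2 + sinh (ρ / 2) ^ 2) :=
          mul_lt_mul_of_pos_left (arsinh_lt_arsinh.2 this) two_pos
    · dsimp only
      rw [cosh_sub_cosh_div_two, mul_div_cancel_left₀ _ two_ne_zero, sinh_arsinh,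
        sq_sqrt (by positivity), add_sub_cancel_right, sqrt_sq hy.le]

theorem integral_Ioi_sinh_mul_cosh_sub_cosh_rpow_mul (hρ : 0 ≤ ρ) (F : ℝ → ℝ) :
    ∫ r in Ioi ρ, sinh r * (cosh r - cosh ρ) ^ (-(1 : ℝ) / 2) * F (sinh (r / 2) ^ 2)
      = 2 * √2 * ∫ t in Ioi (0 : ℝ), F (t ^ 2 + sinh (ρ / 2) ^ 2) := by
  have hc : ∀ r ∈ Ioi ρ, 0 < cosh r - cosh ρ := fun r hr =>
    sub_pos.2 (cosh_lt_cosh_of_nonneg_of_lt hρ hr)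
  have hderiv : ∀ r ∈ Ioi ρ, HasDerivWithinAt (fun r => √((cosh r - cosh ρ) / 2))
      (sinh r / 2 / (2 * √((cosh r - cosh ρ) / 2))) (Ioi ρ) r := fun r hr =>
    (((hasDerivAt_cosh r).sub_const _).div_const 2
      |>.sqrt (half_pos (hc r hr)).ne').hasDerivWithinAt
  have hmono : MonotoneOn (fun r => √((cosh r - cosh ρ) / 2)) (Ioi ρ) := fun r hr s hs hrs =>
    sqrt_le_sqrt <| by
      gcongr
      exact cosh_strictMonoOn.monotoneOn (hρ.trans hr.le) (hρ.trans hs.le) hrs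
  rw [← image_sqrt_cosh_sub_cosh_Ioi hρ,
    integral_image_eq_integral_deriv_smul_of_monotoneOn measurableSet_Ioi hderiv hmono,
    ← integral_const_mul]
  refine setIntegral_congr_fun measurableSet_Ioi fun r hr => ?_
  have hcr := hc r hr
  have hsubst : √((cosh r - cosh ρ) / 2) ^ 2 + sinh (ρ / 2) ^ 2 = sinh (r / 2) ^ 2 := by
    rw [sq_sqrt (half_pos hcr).le, cosh_sub_cosh_div_two]
    ring
  rw [smul_eq_mul, hsubst, neg_div, rpow_neg hcr.le, ← sqrt_eq_rpow, sqrt_div' _ zero_le_two]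
  have : 0 < √(cosh r - cosh ρ) := sqrt_pos.2 hcr
  field_simp
  rw [sq_sqrt zero_le_two]
  ring

end HyperbolicSubstitution

/-- The key definite-integral computation in Lemma 6.4 of the paper:
`∫_ρ^∞ sinh r (cosh r − cosh ρ)^{-1/2} (sinh(r/2))^{-2N} dr
  = √2 √π (Γ(N-1/2)/Γ(N)) (sinh(ρ/2))^{1-2N}` for `ρ > 0` and `N > 1/2`. -/
theorem sinh_integral_eval (ρ N : ℝ) (hρ : 0 < ρ) (hN : 1 / 2 < N) :
    ∫ r in Set.Ioi ρ,
        Real.sinh r * (Real.cosh r - Real.cosh ρ) ^ (-(1 : ℝ) / 2) *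
          Real.sinh (r / 2) ^ (-(2 * N))
      = Real.sqrt 2 * Real.sqrt Real.pi * (Real.Gamma (N - 1 / 2) / Real.Gamma N) *
          Real.sinh (ρ / 2) ^ (1 - 2 * N) := by
  have ha : 0 < sinh (ρ / 2) := sinh_pos_iff.2 (half_pos hρ)
  have hsq : ∀ r ∈ Ioi ρ, sinh (r / 2) ^ (-(2 * N)) = (sinh (r / 2) ^ 2) ^ (-N) := fun r hr =>
    (sq_rpow_neg (sinh_pos_iff.2 (half_pos (hρ.trans hr))).le N).symm
  rw [setIntegral_congr_fun measurableSet_Ioi fun r hr => by rw [hsq r hr],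
    integral_Ioi_sinh_mul_cosh_sub_cosh_rpow_mul hρ.le (fun x => x ^ (-N)),
    integral_Ioi_sq_add_sq_rpow_neg N ha, integral_Ioi_one_add_sq_rpow_neg hN]
  ring
end
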